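/- arXiv:1606.01534 — 10 statements merged into one kernel-verified Lean document; each statement's English description precedes it below -/
import Mathlib

section
/- Let N ≥ 2, let n be the largest integer with 2^n < N, and let 1 ≤ k ≤ n. Suppose a graph g on vertex set V_N = {0,1,...,N-1} contains all ground edges {x,x+1} (for x, x+1 ∈ V_N) and all edges of the form {i·2^j, (i+1)·2^j} with k ≤ j ≤ n and both endpoints in V_N. Then the graph distance between any two vertices of g is at most 2^{k+1} + 2(n−k). -/
theorem stmt0 (N n k : ℕ) (hN : 2 ≤ N) (hn1 : 2 ^ n < N) (hn2 : N ≤ 2 ^ (n + 1))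
    (hk1 : 1 ≤ k) (hkn : k ≤ n) (g : SimpleGraph (Fin N))
    (hground : ∀ x y : Fin N, (x : ℕ) + 1 = (y : ℕ) → g.Adj x y)
    (hedges : ∀ (i j : ℕ), k ≤ j → j ≤ n →
      ∀ (hx : i * 2 ^ j < N) (hy : (i + 1) * 2 ^ j < N),
        g.Adj ⟨i * 2 ^ j, hx⟩ ⟨(i + 1) * 2 ^ j, hy⟩) :
    ∀ x y : Fin N, g.dist x y ≤ 2 ^ (k + 1) + 2 * (n - k) := by
  have hzero : (0 : ℕ) < N := by omega
  -- ground walks: walk down by d using ground edges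
  have ground : ∀ d : ℕ, ∀ x y : Fin N, (x : ℕ) = (y : ℕ) + d →
      ∃ p : g.Walk x y, p.length = d := by
    intro d
    induction d with
    | zero =>
      intro x y h
      have : x = y := Fin.ext (by omega)
      subst this
      exact ⟨.nil, rfl⟩
    | succ d ih =>
      intro x y h
      have hz : (y : ℕ) + d < N := by omega
      set z : Fin N := ⟨(y : ℕ) + d, hz⟩ with hzdef
      have hadj : g.Adj x z := (hground z x (by simp [hzdef]; omega)).symm
      obtain ⟨p, hp⟩ := ih z y (by simp [hzdef])
      exact ⟨.cons hadj p, by simp [hp]⟩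
  -- hub walks: from i * 2^(n+1-t) down to 0 in ≤ t steps
  have hub : ∀ t : ℕ, t ≤ n + 1 - k → ∀ i : ℕ, ∀ h : i * 2 ^ (n + 1 - t) < N,
      ∃ p : g.Walk ⟨i * 2 ^ (n + 1 - t), h⟩ ⟨0, hzero⟩, p.length ≤ t := by
    intro t
    induction t with
    | zero =>
      intro _ i h
      have hi : i = 0 := by
        by_contra hi
        have h1 : 1 ≤ i := Nat.one_le_iff_ne_zero.mpr hi
        have h2 : 2 ^ (n + 1) ≤ i * 2 ^ (n + 1) :=
          Nat.le_mul_of_pos_left _ (by omega)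
        have h3 : i * 2 ^ (n + 1) < N := by simpa using h
        omega
      have hv : (⟨i * 2 ^ (n + 1 - 0), h⟩ : Fin N) = ⟨0, hzero⟩ := by
        apply Fin.ext; simp [hi]
      rw [hv]
      exact ⟨.nil, le_refl 0⟩
    | succ t ih =>
      intro ht i h
      have hjk : k ≤ n + 1 - (t + 1) := by omega
      have hjn : n + 1 - (t + 1) ≤ n := by omega
      have hsucc : n + 1 - t = (n + 1 - (t + 1)) + 1 := by omega
      rcases Nat.even_or_odd i with ⟨i', hi⟩ | ⟨i', hi⟩
      · -- even
        have hval : i * 2 ^ (n + 1 - (t + 1)) = i' * 2 ^ (n + 1 - t) := by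
          rw [hsucc, pow_succ, hi]; ring
        have h' : i' * 2 ^ (n + 1 - t) < N := by omega
        obtain ⟨p, hp⟩ := ih (by omega) i' h'
        have hv : (⟨i * 2 ^ (n + 1 - (t + 1)), h⟩ : Fin N)
            = ⟨i' * 2 ^ (n + 1 - t), h'⟩ := Fin.ext hval
        rw [hv]
        exact ⟨p, by omega⟩
      · -- odd
        have hval : i * 2 ^ (n + 1 - (t + 1)) = (2 * i' + 1) * 2 ^ (n + 1 - (t + 1)) := by
          rw [hi]
        have hpos : 0 < 2 ^ (n + 1 - (t + 1)) := Nat.pow_pos (by norm_num)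
        have hy' : (2 * i' + 1) * 2 ^ (n + 1 - (t + 1)) < N := by omega
        have hx' : 2 * i' * 2 ^ (n + 1 - (t + 1)) < N := by nlinarith
        have hadj := hedges (2 * i') (n + 1 - (t + 1)) hjk hjn hx' hy'
        have hval2 : 2 * i' * 2 ^ (n + 1 - (t + 1)) = i' * 2 ^ (n + 1 - t) := by
          rw [hsucc, pow_succ]; ring
        have h'' : i' * 2 ^ (n + 1 - t) < N := by omega
        obtain ⟨p, hp⟩ := ih (by omega) i' h''
        have hv1 : (⟨i * 2 ^ (n + 1 - (t + 1)), h⟩ : Fin N)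
            = ⟨(2 * i' + 1) * 2 ^ (n + 1 - (t + 1)), hy'⟩ := Fin.ext hval
        have hv2 : (⟨2 * i' * 2 ^ (n + 1 - (t + 1)), hx'⟩ : Fin N)
            = ⟨i' * 2 ^ (n + 1 - t), h''⟩ := Fin.ext hval2
        rw [hv1]
        rw [hv2] at hadj
        exact ⟨.cons hadj.symm p, by simp; omega⟩
  -- from any vertex, a walk to 0 of length ≤ 2^k - 1 + (n + 1 - k)
  have toZero : ∀ x : Fin N, ∃ p : g.Walk x ⟨0, hzero⟩,
      p.length ≤ 2 ^ k - 1 + (n + 1 - k) := by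
    intro x
    have hpow : 0 < 2 ^ k := Nat.pow_pos (by norm_num)
    have hdiv : (x : ℕ) = (x : ℕ) / 2 ^ k * 2 ^ k + (x : ℕ) % 2 ^ k :=
      (Nat.div_add_mod' _ _).symm
    have hm : (x : ℕ) / 2 ^ k * 2 ^ k < N := by
      have := x.isLt; omega
    obtain ⟨p1, hp1⟩ := ground ((x : ℕ) % 2 ^ k) x ⟨(x : ℕ) / 2 ^ k * 2 ^ k, hm⟩ (by simpa using hdiv)
    have hk' : 2 ^ (n + 1 - (n + 1 - k)) = 2 ^ k := by congr 1; omega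
    have hm' : (x : ℕ) / 2 ^ k * 2 ^ (n + 1 - (n + 1 - k)) < N := by rw [hk']; exact hm
    obtain ⟨p2, hp2⟩ := hub (n + 1 - k) (le_refl _) ((x : ℕ) / 2 ^ k) hm'
    have hv : (⟨(x : ℕ) / 2 ^ k * 2 ^ k, hm⟩ : Fin N)
        = ⟨(x : ℕ) / 2 ^ k * 2 ^ (n + 1 - (n + 1 - k)), hm'⟩ := Fin.ext (by simp [hk'])
    refine ⟨(p1.copy rfl hv).append p2, ?_⟩
    rw [SimpleGraph.Walk.length_append, SimpleGraph.Walk.length_copy, hp1]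
    have hr : (x : ℕ) % 2 ^ k < 2 ^ k := Nat.mod_lt _ hpow
    omega
  intro x y
  obtain ⟨px, hpx⟩ := toZero x
  obtain ⟨py, hpy⟩ := toZero y
  have hd := SimpleGraph.dist_le (px.append py.reverse)
  rw [SimpleGraph.Walk.length_append, SimpleGraph.Walk.length_reverse] at hd
  have hpk : 1 ≤ 2 ^ k := Nat.one_le_two_pow
  calc g.dist x y ≤ px.length + py.length := hd
    _ ≤ 2 ^ (k + 1) + 2 * (n - k) := by
        rw [pow_succ]; omega
end

section
/- Let N ≥ 2, let n be the largest integer with 2^n < N, and let 1 ≤ k ≤ n. Suppose a graph g on V_N = {0,...,N-1} contains all ground edges {x,x+1} and all edges {i·2^j,(i+1)·2^j} with 1 ≤ j ≤ k and both endpoints in V_N. Then the diameter of g is at most 2^{n−k+2} + 2k. -/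
open SimpleGraph

theorem stmt1 (N n k : ℕ) (hN : 2 ≤ N) (hn1 : 2 ^ n < N) (hn2 : N ≤ 2 ^ (n + 1))
    (hk1 : 1 ≤ k) (hkn : k ≤ n) (g : SimpleGraph (Fin N))
    (hground : ∀ x y : Fin N, (x : ℕ) + 1 = (y : ℕ) → g.Adj x y)
    (hedges : ∀ (i j : ℕ), 1 ≤ j → j ≤ k →
      ∀ (hx : i * 2 ^ j < N) (hy : (i + 1) * 2 ^ j < N),
        g.Adj ⟨i * 2 ^ j, hx⟩ ⟨(i + 1) * 2 ^ j, hy⟩) :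
    ∀ x y : Fin N, g.dist x y ≤ 2 ^ (n - k + 2) + 2 * k := by
  have div_lt : ∀ (j : ℕ) (x : Fin N), (x : ℕ) / 2 ^ j * 2 ^ j < N := fun j x =>
    lt_of_le_of_lt (Nat.div_mul_le_self _ _) x.isLt
  -- Lemma A: walk from x down to x/2^j * 2^j of length ≤ j
  have A : ∀ j, j ≤ k → ∀ x : Fin N,
      ∃ w : g.Walk x ⟨(x : ℕ) / 2 ^ j * 2 ^ j, div_lt j x⟩, w.length ≤ j := by
    intro j
    induction j with
    | zero =>
      intro _ x
      refine ⟨Walk.nil.copy rfl ?_, Nat.le_of_eq (Walk.length_copy _ _ _)⟩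
      ext; simp
    | succ j ih =>
      intro hjk x
      obtain ⟨w, hw⟩ := ih (by omega) x
      set q := (x : ℕ) / 2 ^ j with hq
      have hdiv : (x : ℕ) / 2 ^ (j + 1) = q / 2 := by
        rw [hq, Nat.div_div_eq_div_mul, pow_succ]
      rcases Nat.even_or_odd q with he | ho
      · have hz : (x : ℕ) / 2 ^ (j + 1) * 2 ^ (j + 1) = q * 2 ^ j := by
          rw [hdiv, pow_succ]
          obtain ⟨m, hm⟩ := he
          have hm2 : q / 2 = m := by omega
          rw [hm2, hm]; ring
        refine ⟨w.copy rfl (by ext; simp [hz, ← hq]), ?_⟩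
        simp only [Walk.length_copy]
        omega
      · have hq2 : q = 2 * (q / 2) + 1 := (Nat.odd_iff.mp ho) ▸ (Nat.div_add_mod q 2).symm ▸ by omega
        set i := q / 2 with hi
        have hz' : (x : ℕ) / 2 ^ (j + 1) * 2 ^ (j + 1) = (2 * i) * 2 ^ j := by
          rw [hdiv, pow_succ]; ring
        have hzval : q * 2 ^ j = (2 * i + 1) * 2 ^ j := by rw [← hq2]
        have hlt1 : (2 * i) * 2 ^ j < N := by
          have := div_lt (j + 1) x
          rwa [hz'] at this
        have hlt2 : (2 * i + 1) * 2 ^ j < N := by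
          have := div_lt j x
          rwa [← hq, hzval] at this
        have adj : g.Adj ⟨(2 * i + 1) * 2 ^ j, hlt2⟩ ⟨(2 * i) * 2 ^ j, hlt1⟩ := by
          rcases Nat.eq_zero_or_pos j with hj0 | hj0
          · subst hj0
            exact (hground ⟨(2 * i) * 2 ^ 0, hlt1⟩ ⟨(2 * i + 1) * 2 ^ 0, hlt2⟩ (by simp)).symm
          · exact (hedges (2 * i) j hj0 (by omega) hlt1 hlt2).symm
        refine ⟨((w.copy rfl (by ext; simp [hzval, ← hq, hq2])).concat adj).copy rfl (by ext; simp [hz']), ?_⟩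
        simp only [Walk.length_copy, Walk.length_concat]
        omega
  -- Lemma B: walk between multiples of 2^k
  have B : ∀ d a (h : (a + d) * 2 ^ k < N),
      ∃ w : g.Walk ⟨(a + d) * 2 ^ k, h⟩
        ⟨a * 2 ^ k, lt_of_le_of_lt (Nat.mul_le_mul_right _ (Nat.le_add_right a d)) h⟩,
        w.length ≤ d := by
    intro d
    induction d with
    | zero =>
      intro a h
      exact ⟨Walk.nil.copy rfl (by ext; simp), by simp⟩
    | succ d ih =>
      intro a h
      have h' : (a + d) * 2 ^ k < N :=
        lt_of_le_of_lt (Nat.mul_le_mul_right _ (by omega)) h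
      obtain ⟨w, hw⟩ := ih a h'
      have adj : g.Adj ⟨(a + d + 1) * 2 ^ k, by rwa [show a + d + 1 = a + (d+1) by ring]⟩
          ⟨(a + d) * 2 ^ k, h'⟩ :=
        (hedges (a + d) k hk1 le_rfl h' (by rwa [show a + d + 1 = a + (d+1) by ring])).symm
      refine ⟨(Walk.cons adj w).copy (by ext; simp; ring) rfl, ?_⟩
      simp only [Walk.length_copy, Walk.length_cons]
      omega
  -- main one-sided lemma
  have main : ∀ x y : Fin N, (y : ℕ) / 2 ^ k ≤ (x : ℕ) / 2 ^ k →
      g.dist x y ≤ 2 ^ (n - k + 2) + 2 * k := by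
    intro x y hab
    set a := (y : ℕ) / 2 ^ k with ha
    set d := (x : ℕ) / 2 ^ k - a with hd
    have hxd : (x : ℕ) / 2 ^ k = a + d := by omega
    obtain ⟨wx, hwx⟩ := A k le_rfl x
    obtain ⟨wy, hwy⟩ := A k le_rfl y
    have hB : (a + d) * 2 ^ k < N := by rw [← hxd]; exact div_lt k x
    obtain ⟨wb, hwb⟩ := B d a hB
    have e1 : (⟨(x : ℕ) / 2 ^ k * 2 ^ k, div_lt k x⟩ : Fin N) = ⟨(a + d) * 2 ^ k, hB⟩ := by
      ext; simp [hxd]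
    have e2 : (⟨(y : ℕ) / 2 ^ k * 2 ^ k, div_lt k y⟩ : Fin N)
        = ⟨a * 2 ^ k, lt_of_le_of_lt (Nat.mul_le_mul_right _ (Nat.le_add_right a d)) hB⟩ := by
      ext; simp [← ha]
    have hlen : g.dist x y ≤ k + d + k := by
      have hdl := SimpleGraph.dist_le
        (((wx.copy rfl e1).append wb).append (wy.copy rfl e2).reverse)
      simp only [Walk.length_append, Walk.length_copy, Walk.length_reverse] at hdl
      omega
    have hdlt : d ≤ 2 ^ (n - k + 2) := by
      have hx2 : (x : ℕ) < 2 ^ (n + 1) := lt_of_lt_of_le x.isLt hn2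
      have : (x : ℕ) / 2 ^ k < 2 ^ (n + 1 - k) := by
        rw [Nat.div_lt_iff_lt_mul (pow_pos (by norm_num : (0:ℕ) < 2) k)]
        calc (x : ℕ) < 2 ^ (n + 1) := hx2
          _ = 2 ^ (n + 1 - k) * 2 ^ k := by rw [← pow_add]; congr 1; omega
      have h1 : a + d < 2 ^ (n + 1 - k) := hxd ▸ this
      have h2 : 2 ^ (n + 1 - k) ≤ 2 ^ (n - k + 2) := Nat.pow_le_pow_right (by norm_num) (by omega)
      exact le_trans (Nat.le_of_lt (lt_of_le_of_lt (Nat.le_add_left d a) h1)) h2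
    calc g.dist x y ≤ k + d + k := hlen
      _ ≤ k + 2 ^ (n - k + 2) + k := by omega
      _ = 2 ^ (n - k + 2) + 2 * k := by ring
  intro x y
  rcases le_total ((y : ℕ) / 2 ^ k) ((x : ℕ) / 2 ^ k) with h | h
  · exact main x y h
  · rw [SimpleGraph.dist_comm]; exact main y x h
end

section
/- Let g ∈ 𝒢_N, let σ > 0, and suppose x_0 < x_1 < ... < x_m are vertices such that each x_i is a σ-cutpoint of g and x_{i+1} − x_i ≥ σ for all i. If x, y ∈ V_N and indices j < j' satisfy x < x_j and x_{j'} ≤ y, then d_g(x,y) ≥ j' − j. -/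
/-- `x` is a `σ`-cutpoint of `g`: no edge `{a,b}` of `g` has `a < x` and `b ≥ x + σ`. -/
def IsCutpoint {N : ℕ} (g : SimpleGraph (Fin N)) (σ : ℝ) (x : Fin N) : Prop :=
  ¬ ∃ a b : Fin N, g.Adj a b ∧ (a : ℕ) < (x : ℕ) ∧ ((x : ℕ) : ℝ) + σ ≤ ((b : ℕ) : ℝ)

private lemma walk_bound {N : ℕ} (g : SimpleGraph (Fin N)) (φ : Fin N → ℕ)
    (h : ∀ a b, g.Adj a b → φ b ≤ φ a + 1) :
    ∀ {u v : Fin N} (w : g.Walk u v), φ v ≤ φ u + w.length := by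
  intro u v w
  induction w with
  | nil => simp
  | @cons u c v hadj w ih =>
    calc φ v ≤ φ c + w.length := ih
    _ ≤ (φ u + 1) + w.length := by have := h u c hadj; omega
    _ = φ u + (SimpleGraph.Walk.cons hadj w).length := by
        simp [SimpleGraph.Walk.length_cons]; omega

private lemma reach_aux {N : ℕ} (g : SimpleGraph (Fin N))
    (hground : ∀ x y : Fin N, (x : ℕ) + 1 = (y : ℕ) → g.Adj x y) :
    ∀ (d : ℕ) (a b : Fin N), (a : ℕ) + d = (b : ℕ) → g.Reachable a b := by
  intro d
  induction d with
  | zero => intro a b hab; have : a = b := Fin.ext (by omega); exact this ▸ SimpleGraph.Reachable.refl a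
  | succ d ih =>
    intro a b hab
    have hc : (a : ℕ) + d < N := by have := b.isLt; omega
    let c : Fin N := ⟨(a : ℕ) + d, hc⟩
    have h1 : g.Reachable a c := ih a c rfl
    have h2 : g.Adj c b := hground c b (by simp [c]; omega)
    exact h1.trans h2.reachable

theorem stmt3 (N : ℕ) (g : SimpleGraph (Fin N))
    (hground : ∀ x y : Fin N, (x : ℕ) + 1 = (y : ℕ) → g.Adj x y)
    (σ : ℝ) (hσ : 0 < σ) (m : ℕ) (xs : Fin (m + 1) → Fin N)
    (hcut : ∀ i, IsCutpoint g σ (xs i))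
    (hsep : ∀ i : Fin m, (((xs i.castSucc : Fin N) : ℕ) : ℝ) + σ ≤ (((xs i.succ : Fin N) : ℕ) : ℝ))
    (x y : Fin N) (j j' : Fin (m + 1)) (hjj : j < j')
    (hx : (x : ℕ) < ((xs j : Fin N) : ℕ)) (hy : ((xs j' : Fin N) : ℕ) ≤ (y : ℕ)) :
    (j' : ℕ) - (j : ℕ) ≤ g.dist x y := by
  -- xs is strictly monotone in value
  have hmono : StrictMono (fun i : Fin (m+1) => ((xs i : Fin N) : ℕ)) := by
    apply Fin.strictMono_iff_lt_succ.2
    intro i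
    have := hsep i
    have : (((xs i.castSucc : Fin N) : ℕ) : ℝ) < (((xs i.succ : Fin N) : ℕ) : ℝ) := by linarith
    exact_mod_cast this
  -- potential function
  set φ : Fin N → ℕ := fun v =>
    (Finset.univ.filter (fun k : Fin (m+1) => j ≤ k ∧ ((xs k : Fin N) : ℕ) ≤ (v : ℕ))).card with hφ
  have hφdef : ∀ v : Fin N, φ v = (Finset.univ.filter (fun k : Fin (m+1) => j ≤ k ∧ ((xs k : Fin N) : ℕ) ≤ (v : ℕ))).card := fun _ => rfl
  have hφmono : ∀ a b : Fin N, (a : ℕ) ≤ (b : ℕ) → φ a ≤ φ b := by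
    intro a b hab
    apply Finset.card_le_card
    intro k hk
    simp only [Finset.mem_filter, Finset.mem_univ, true_and] at hk ⊢
    exact ⟨hk.1, hk.2.trans hab⟩
  -- edges change φ by at most 1
  have hedge : ∀ a b : Fin N, g.Adj a b → φ b ≤ φ a + 1 := by
    intro a b hadj
    rcases le_or_gt (b : ℕ) (a : ℕ) with hba | hab
    · exact (hφmono b a hba).trans (Nat.le_succ _)
    by_contra hcon
    push_neg at hcon
    have hsub : (Finset.univ.filter (fun k : Fin (m+1) => j ≤ k ∧ ((xs k : Fin N) : ℕ) ≤ (a : ℕ)))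
        ⊆ (Finset.univ.filter (fun k : Fin (m+1) => j ≤ k ∧ ((xs k : Fin N) : ℕ) ≤ (b : ℕ))) := by
      intro k hk
      simp only [Finset.mem_filter, Finset.mem_univ, true_and] at hk ⊢
      exact ⟨hk.1, hk.2.trans hab.le⟩
    have hcard : 1 < ((Finset.univ.filter (fun k : Fin (m+1) => j ≤ k ∧ ((xs k : Fin N) : ℕ) ≤ (b : ℕ))) \
        (Finset.univ.filter (fun k : Fin (m+1) => j ≤ k ∧ ((xs k : Fin N) : ℕ) ≤ (a : ℕ)))).card := by
      rw [Finset.card_sdiff_of_subset hsub]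
      rw [hφdef a, hφdef b] at hcon
      omega
    obtain ⟨k, hk, k', hk', hne⟩ := Finset.one_lt_card.1 hcard
    simp only [Finset.mem_sdiff, Finset.mem_filter, Finset.mem_univ, true_and, not_and, not_le] at hk hk'
    -- both k, k' satisfy: j ≤ k, xs k ≤ b, a < xs k
    have hk2 : (a : ℕ) < ((xs k : Fin N) : ℕ) := hk.2 hk.1.1
    have hk'2 : (a : ℕ) < ((xs k' : Fin N) : ℕ) := hk'.2 hk'.1.1
    -- WLOG k < k'
    rcases hne.lt_or_gt with hlt | hlt
    · -- k < k'
      have hkm : (k : ℕ) < m := by have := hlt; have := k'.isLt; omega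
      let i : Fin m := ⟨k, hkm⟩
      have hcs : i.castSucc = k := Fin.ext rfl
      have hs : (i.succ : ℕ) ≤ (k' : ℕ) := by simp [Fin.val_succ, i]; omega
      have hmle : ((xs i.succ : Fin N) : ℕ) ≤ ((xs k' : Fin N) : ℕ) := by
        rcases eq_or_lt_of_le hs with h | h
        · exact le_of_eq (congrArg (fun t : Fin N => (t : ℕ)) (congrArg xs (Fin.ext h : i.succ = k')))
        · exact (hmono h).le
      exact hcut k ⟨a, b, hadj, hk2, by
        have := hsep i
        rw [hcs] at this
        have hb : (((xs k' : Fin N) : ℕ) : ℝ) ≤ ((b : ℕ) : ℝ) := by exact_mod_cast hk'.1.2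
        have : (((xs i.succ : Fin N) : ℕ) : ℝ) ≤ (((xs k' : Fin N) : ℕ) : ℝ) := by exact_mod_cast hmle
        linarith⟩
    · -- k' < k : symmetric
      have hkm : (k' : ℕ) < m := by have := hlt; have := k.isLt; omega
      let i : Fin m := ⟨k', hkm⟩
      have hcs : i.castSucc = k' := Fin.ext rfl
      have hs : (i.succ : ℕ) ≤ (k : ℕ) := by simp [Fin.val_succ, i]; omega
      have hmle : ((xs i.succ : Fin N) : ℕ) ≤ ((xs k : Fin N) : ℕ) := by
        rcases eq_or_lt_of_le hs with h | h
        · exact le_of_eq (congrArg (fun t : Fin N => (t : ℕ)) (congrArg xs (Fin.ext h : i.succ = k)))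
        · exact (hmono h).le
      exact hcut k' ⟨a, b, hadj, hk'2, by
        have := hsep i
        rw [hcs] at this
        have hb : (((xs k : Fin N) : ℕ) : ℝ) ≤ ((b : ℕ) : ℝ) := by exact_mod_cast hk.1.2
        have : (((xs i.succ : Fin N) : ℕ) : ℝ) ≤ (((xs k : Fin N) : ℕ) : ℝ) := by exact_mod_cast hmle
        linarith⟩
  -- φ x = 0
  have hφx : φ x = 0 := by
    rw [hφ, Finset.card_eq_zero]
    ext k
    simp only [Finset.mem_filter, Finset.mem_univ, true_and, Finset.notMem_empty, iff_false, not_and, not_le]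
    intro hjk
    have : ((xs j : Fin N) : ℕ) ≤ ((xs k : Fin N) : ℕ) := by
      rcases eq_or_lt_of_le hjk with h | h
      · exact le_of_eq (congrArg (fun t => ((xs t : Fin N) : ℕ)) h)
      · exact (hmono h).le
    omega
  -- φ y ≥ j' - j + 1
  have hφy : (j' : ℕ) - (j : ℕ) + 1 ≤ φ y := by
    have hsub : Finset.Icc j j' ⊆
        Finset.univ.filter (fun k : Fin (m+1) => j ≤ k ∧ ((xs k : Fin N) : ℕ) ≤ (y : ℕ)) := by
      intro k hk
      rw [Finset.mem_Icc] at hk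
      simp only [Finset.mem_filter, Finset.mem_univ, true_and]
      refine ⟨hk.1, le_trans ?_ hy⟩
      rcases eq_or_lt_of_le hk.2 with h | h
      · exact le_of_eq (congrArg (fun t => ((xs t : Fin N) : ℕ)) h)
      · exact (hmono h).le
    have := Finset.card_le_card hsub
    rw [Fin.card_Icc] at this
    have hj : (j : ℕ) ≤ (j' : ℕ) := le_of_lt hjj
    rw [hφdef y]
    omega
  -- connectivity
  have hreach : g.Reachable x y := by
    rcases le_total (x : ℕ) (y : ℕ) with h | h
    · exact reach_aux g hground ((y : ℕ) - (x : ℕ)) x y (by omega)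
    · exact (reach_aux g hground ((x : ℕ) - (y : ℕ)) y x (by omega)).symm
  obtain ⟨w, hw⟩ := hreach.exists_walk_length_eq_dist
  have := walk_bound g φ hedge w
  rw [hw, hφx] at this
  omega
end

section
/- Let g ∈ 𝒢_N, σ > 0, and let X_0 = 0 and recursively X_{i+1} = inf{ x ≥ X_i + σ : x is a σ-cutpoint of g }, with the convention X_{i+1} = N if the set is empty. Let T = sup{ i : X_i < N }. Then for every 0 < T_1 < T_2 ≤ T, one has ℋ_1(g) ≥ (2·X_{T_1}·(N − X_{T_2}) / N²) · (T_2 − T_1). -/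
open scoped Classical

/-- The natural number `x` (a vertex of `V_N`) is a `σ`-cutpoint of `g`:
no edge `{a,b}` of `g` has `a < x` and `b ≥ x + σ`. -/
def IsCutpointNat {N : ℕ} (g : SimpleGraph (Fin N)) (σ : ℝ) (x : ℕ) : Prop :=
  ¬ ∃ a b : Fin N, g.Adj a b ∧ (a : ℕ) < x ∧ (x : ℝ) + σ ≤ ((b : ℕ) : ℝ)

theorem stmt4 (N : ℕ) (hN : 0 < N) (g : SimpleGraph (Fin N))
    (hground : ∀ x y : Fin N, (x : ℕ) + 1 = (y : ℕ) → g.Adj x y)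
    (σ : ℝ) (hσ : 0 < σ) (X : ℕ → ℕ) (hX0 : X 0 = 0)
    (hX : ∀ i, X (i + 1) =
      if h : {x : ℕ | (X i : ℝ) + σ ≤ (x : ℝ) ∧ x < N ∧ IsCutpointNat g σ x}.Nonempty
      then sInf {x : ℕ | (X i : ℝ) + σ ≤ (x : ℝ) ∧ x < N ∧ IsCutpointNat g σ x}
      else N)
    (T : ℕ) (hT : T = sSup {i : ℕ | X i < N})
    (T₁ T₂ : ℕ) (h1 : 0 < T₁) (h12 : T₁ < T₂) (h2T : T₂ ≤ T) :
    (2 * (X T₁ : ℝ) * ((N : ℝ) - (X T₂ : ℝ)) / (N : ℝ) ^ 2) * ((T₂ : ℝ) - (T₁ : ℝ))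
      ≤ (∑ x : Fin N, ∑ y : Fin N, (g.dist x y : ℝ)) / (N : ℝ) ^ 2 := by
  -- basic structure of the recursion
  have key : ∀ i, ((X i : ℝ) + σ ≤ (X (i+1) : ℝ) ∧ X (i+1) < N ∧
      IsCutpointNat g σ (X (i+1))) ∨ X (i+1) = N := by
    intro i
    rw [hX i]
    split
    · rename_i h
      left
      exact Nat.sInf_mem h
    · right; rfl
  have hle : ∀ i, X i ≤ N := by
    intro i
    induction i with
    | zero => rw [hX0]; omega
    | succ n ih =>
      rcases key n with ⟨_, h2, _⟩ | h
      · exact h2.le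
      · exact h.le
  have hstrict : ∀ i, X (i+1) < N → X i < X (i+1) := by
    intro i hiN
    rcases key i with ⟨h1', _, _⟩ | h
    · have : (X i : ℝ) < (X (i+1) : ℝ) := by linarith
      exact_mod_cast this
    · omega
  have hmono : Monotone X := by
    apply monotone_nat_of_le_succ
    intro i
    rcases key i with ⟨h1', _, _⟩ | h
    · have : (X i : ℝ) < (X (i+1) : ℝ) := by linarith
      have := this.le
      exact_mod_cast this
    · rw [h]; exact hle i
  have hlb : ∀ i, min i N ≤ X i := by
    intro i
    induction i with
    | zero => omega
    | succ n ih =>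
      rcases key n with ⟨h1', h2', _⟩ | h
      · have hlt : X n < X (n+1) := hstrict n h2'
        omega
      · rw [h]; omega
  have hbdd : BddAbove {i : ℕ | X i < N} := by
    refine ⟨N, fun i hi => ?_⟩
    have := hlb i
    simp only [Set.mem_setOf_eq] at hi
    omega
  have hne : (0:ℕ) ∈ {i : ℕ | X i < N} := by
    simp only [Set.mem_setOf_eq, hX0]; exact hN
  have hXT : X T < N := by
    rw [hT]; exact Nat.sSup_mem ⟨0, hne⟩ hbdd
  have hXTlt : ∀ i, i ≤ T → X i < N := fun i hi => lt_of_le_of_lt (hmono hi) hXT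
  have hcut : ∀ i, 1 ≤ i → i ≤ T → IsCutpointNat g σ (X i) := by
    intro i hi1 hi2
    obtain ⟨j, rfl⟩ : ∃ j, i = j + 1 := ⟨i - 1, by omega⟩
    rcases key j with ⟨_, _, h3⟩ | h
    · exact h3
    · have := hXTlt (j+1) hi2
      omega
  -- an edge starting below cutpoint `X j` ends below `X (j+1)`
  have hedge : ∀ j, 1 ≤ j → j + 1 ≤ T → ∀ u v : Fin N, g.Adj u v →
      (u : ℕ) < X j → (v : ℕ) < X (j+1) := by
    intro j hj1 hj2 u v hadj huv
    rcases key j with ⟨ha, _, _⟩ | h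
    · have hcutj := hcut j hj1 (by omega)
      by_contra hv
      push_neg at hv
      exact hcutj ⟨u, v, hadj, huv, by
        have : (X (j+1) : ℝ) ≤ ((v : ℕ) : ℝ) := by exact_mod_cast hv
        linarith⟩
    · have := hXTlt (j+1) hj2
      omega
  -- every walk from below X T₁ to at least X T₂ has length ≥ T₂ - T₁
  have hwalk : ∀ (u b : Fin N) (w : g.Walk u b) (j : ℕ), T₁ ≤ j → j ≤ T₂ →
      (u : ℕ) < X j → X T₂ ≤ (b : ℕ) → T₂ - j ≤ w.length := by
    intro u b w
    induction w with
    | nil =>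
      intro j hj1 hj2 hu hb
      have := hmono hj2
      omega
    | cons hadj w ih =>
      rename_i u' v' _
      intro j hj1 hj2 hu hb
      by_cases hjT : j = T₂
      · simp only [SimpleGraph.Walk.length_cons]
        omega
      · have hv : ((v' : ℕ)) < X (j+1) := hedge j (by omega) (by omega) _ _ hadj hu
        have := ih (j+1) (by omega) (by omega) hv hb
        simp only [SimpleGraph.Walk.length_cons]
        omega
  -- connectivity
  have hreach0 : ∀ n : ℕ, ∀ x : Fin N, (x : ℕ) = n → g.Reachable ⟨0, hN⟩ x := by
    intro n
    induction n with
    | zero =>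
      intro x hx
      have : x = ⟨0, hN⟩ := Fin.ext hx
      rw [this]
    | succ k ih =>
      intro x hx
      have hk : k < N := by omega
      have h1' := ih ⟨k, hk⟩ rfl
      exact h1'.trans (hground ⟨k, hk⟩ x (by simp [hx])).reachable
  have hreach : ∀ x y : Fin N, g.Reachable x y := fun x y =>
    ((hreach0 _ x rfl).symm).trans (hreach0 _ y rfl)
  -- distance lower bound
  have hdist : ∀ a b : Fin N, (a : ℕ) < X T₁ → X T₂ ≤ (b : ℕ) →
      T₂ - T₁ ≤ g.dist a b := by
    intro a b ha hb
    obtain ⟨w, hw⟩ := (hreach a b).exists_walk_length_eq_dist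
    rw [← hw]
    exact hwalk a b w T₁ le_rfl h12.le ha hb
  -- counting
  set A := X T₁ with hA
  set B := X T₂ with hB
  have hAB : A ≤ B := hmono h12.le
  have hBN : B < N := hXTlt T₂ h2T
  have hAN : A ≤ N := hle T₁
  set SA : Finset (Fin N) := Finset.univ.filter (fun x => (x : ℕ) < A) with hSA
  set SB : Finset (Fin N) := Finset.univ.filter (fun x => B ≤ (x : ℕ)) with hSB
  have hcardA : SA.card = A := by
    rw [hSA]
    have : Finset.univ.filter (fun x : Fin N => (x : ℕ) < A)
        = Finset.map (Fin.castLEEmb hAN) Finset.univ := by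
      ext x
      simp only [Finset.mem_filter, Finset.mem_univ, true_and, Finset.mem_map]
      constructor
      · intro h
        exact ⟨⟨(x : ℕ), h⟩, by simp [Fin.castLEEmb, Fin.castLE]⟩
      · rintro ⟨y, rfl⟩
        simpa [Fin.castLEEmb, Fin.castLE] using y.isLt
    rw [this, Finset.card_map, Finset.card_univ, Fintype.card_fin]
  have hcardB : SB.card = N - B := by
    have hBcard : (Finset.univ.filter (fun x : Fin N => (x : ℕ) < B)).card = B := by
      have : Finset.univ.filter (fun x : Fin N => (x : ℕ) < B)
          = Finset.map (Fin.castLEEmb hBN.le) Finset.univ := by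
        ext x
        simp only [Finset.mem_filter, Finset.mem_univ, true_and, Finset.mem_map]
        constructor
        · intro h
          exact ⟨⟨(x : ℕ), h⟩, by simp [Fin.castLEEmb, Fin.castLE]⟩
        · rintro ⟨y, rfl⟩
          simpa [Fin.castLEEmb, Fin.castLE] using y.isLt
      rw [this, Finset.card_map, Finset.card_univ, Fintype.card_fin]
    have hcompl : SB = (Finset.univ.filter (fun x : Fin N => (x : ℕ) < B))ᶜ := by
      ext x
      simp [hSB, Nat.not_lt]
    rw [hcompl, Finset.card_compl, hBcard, Fintype.card_fin]
  -- the set of "far" pairs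
  set P : Finset (Fin N × Fin N) := SA ×ˢ SB ∪ SB ×ˢ SA with hP
  have hdisj : Disjoint (SA ×ˢ SB) (SB ×ˢ SA) := by
    rw [Finset.disjoint_left]
    rintro ⟨x, y⟩ hx hy
    simp only [Finset.mem_product, hSA, hSB, Finset.mem_filter, Finset.mem_univ,
      true_and] at hx hy
    omega
  have hPcard : P.card = 2 * A * (N - B) := by
    rw [hP, Finset.card_union_of_disjoint hdisj, Finset.card_product,
      Finset.card_product, hcardA, hcardB]
    ring
  have hPdist : ∀ p ∈ P, ((T₂ - T₁ : ℕ) : ℝ) ≤ (g.dist p.1 p.2 : ℝ) := by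
    rintro ⟨x, y⟩ hp
    rw [hP, Finset.mem_union] at hp
    rcases hp with hp | hp <;>
      simp only [Finset.mem_product, hSA, hSB, Finset.mem_filter, Finset.mem_univ,
        true_and] at hp
    · exact_mod_cast hdist x y hp.1 hp.2
    · have := hdist y x hp.2 hp.1
      rw [SimpleGraph.dist_comm] at this
      exact_mod_cast this
  have hsum : (2 * (A : ℝ) * ((N : ℝ) - (B : ℝ))) * ((T₂ : ℝ) - (T₁ : ℝ))
      ≤ ∑ x : Fin N, ∑ y : Fin N, (g.dist x y : ℝ) := by
    have h1' : ∑ x : Fin N, ∑ y : Fin N, (g.dist x y : ℝ)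
        = ∑ p ∈ Finset.univ ×ˢ Finset.univ, (g.dist p.1 p.2 : ℝ) := by
      rw [Finset.sum_product]
    rw [h1']
    have h2' : ∑ p ∈ P, (g.dist p.1 p.2 : ℝ)
        ≤ ∑ p ∈ Finset.univ ×ˢ Finset.univ, (g.dist p.1 p.2 : ℝ) := by
      apply Finset.sum_le_sum_of_subset_of_nonneg
      · intro p _; simp
      · intro p _ _; positivity
    refine le_trans ?_ h2'
    have h3' : ∑ p ∈ P, ((T₂ - T₁ : ℕ) : ℝ) ≤ ∑ p ∈ P, (g.dist p.1 p.2 : ℝ) :=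
      Finset.sum_le_sum hPdist
    refine le_trans ?_ h3'
    rw [Finset.sum_const, hPcard, nsmul_eq_mul]
    apply le_of_eq
    push_cast [Nat.cast_sub hBN.le, Nat.cast_sub h12.le]
    ring
  -- final arithmetic
  have hN2 : (0 : ℝ) < (N : ℝ) ^ 2 := by positivity
  rw [div_mul_eq_mul_div]
  exact (div_le_div_iff_of_pos_right hN2).mpr hsum
end

section
/- Let g ∈ 𝒢_N, let I, I' ⊆ V_N be two disjoint integer intervals, and let T be the minimum of the number of local cutpoints of g in I and the number of local cutpoints of g in I'. Then Σ_{x ∈ I, y ∈ I'} d_g(x,y) ≥ T³/63. -/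
open scoped Classical

/-- `x` is a local cutpoint of `g` in the interval `I`: `x ∈ I` and there is no
edge `{u,v}` of `g` with `u < x < v` and `{u,v} ∩ I ≠ ∅`. -/
def IsLocalCutpoint {N : ℕ} (g : SimpleGraph (Fin N)) (I : Finset (Fin N)) (x : Fin N) : Prop :=
  x ∈ I ∧ ¬ ∃ u v : Fin N, g.Adj u v ∧ u < x ∧ x < v ∧ (u ∈ I ∨ v ∈ I)

/-- A graph on `Fin N` containing all consecutive edges is preconnected. -/
lemma stmt6_preconnected {N : ℕ} (g : SimpleGraph (Fin N))
    (hground : ∀ x y : Fin N, (x : ℕ) + 1 = (y : ℕ) → g.Adj x y) :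
    ∀ x y : Fin N, g.Reachable x y := by
  have key : ∀ (n : ℕ) (hn : n < N) (x : Fin N), (x : ℕ) ≤ n → g.Reachable x ⟨n, hn⟩ := by
    intro n
    induction n with
    | zero =>
      intro hn x hx
      have : x = ⟨0, hn⟩ := by
        apply Fin.ext; simp; omega
      rw [this]
    | succ n ih =>
      intro hn x hx
      rcases Nat.lt_or_ge (x : ℕ) (n + 1) with h | h
      · have hn' : n < N := by omega
        have h1 : g.Reachable x ⟨n, hn'⟩ := ih hn' x (by omega)
        have h2 : g.Adj (⟨n, hn'⟩ : Fin N) ⟨n + 1, hn⟩ := hground _ _ rfl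
        exact h1.trans h2.reachable
      · have : x = ⟨n + 1, hn⟩ := by apply Fin.ext; simp; omega
        rw [this]
  intro x y
  rcases le_total (x : ℕ) (y : ℕ) with h | h
  · have := key (y : ℕ) y.isLt x h
    simpa using this
  · have := key (x : ℕ) x.isLt y h
    exact (by simpa using this : g.Reachable y x).symm

theorem stmt6 (N : ℕ) (g : SimpleGraph (Fin N))
    (hground : ∀ x y : Fin N, (x : ℕ) + 1 = (y : ℕ) → g.Adj x y)
    (a b a' b' : Fin N) (hab : a ≤ b) (hab' : a' ≤ b')
    (I I' : Finset (Fin N)) (hI : I = Finset.Icc a b) (hI' : I' = Finset.Icc a' b')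
    (hdisj : Disjoint I I')
    (T : ℕ)
    (hT : T = min (I.filter (IsLocalCutpoint g I)).card (I'.filter (IsLocalCutpoint g I')).card) :
    (T : ℝ) ^ 3 / 63 ≤ ∑ x ∈ I, ∑ y ∈ I', (g.dist x y : ℝ) := by
  classical
  have hreach := stmt6_preconnected g hground
  set C : Finset (Fin N) := I.filter (IsLocalCutpoint g I) with hC
  set m : ℕ := C.card with hm
  set φ : Fin N → ℕ := fun v => (C.filter (fun c => c ≤ v)).card with hφ
  -- basic facts about cutpoints
  have hCmem : ∀ c ∈ C, c ∈ I ∧ ¬ ∃ u v : Fin N, g.Adj u v ∧ u < c ∧ c < v ∧ (u ∈ I ∨ v ∈ I) := by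
    intro c hc
    rw [hC, Finset.mem_filter] at hc
    exact ⟨hc.1, hc.2.2⟩
  -- monotonicity of φ
  have hφmono : ∀ u v : Fin N, u ≤ v → φ u ≤ φ v := by
    intro u v huv
    apply Finset.card_le_card
    intro c hc
    rw [Finset.mem_filter] at hc ⊢
    exact ⟨hc.1, le_trans hc.2 huv⟩
  have hφle : ∀ v : Fin N, φ v ≤ m := fun v => Finset.card_filter_le _ _
  -- an edge with both endpoints in I changes φ by at most 1
  have hE1 : ∀ u v : Fin N, g.Adj u v → u < v → u ∈ I → v ∈ I → φ v ≤ φ u + 1 := by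
    intro u v hadj huv hu hv
    have hsub : C.filter (fun c => c ≤ v) ⊆ insert v (C.filter (fun c => c ≤ u)) := by
      intro c hc
      rw [Finset.mem_filter] at hc
      rcases eq_or_lt_of_le hc.2 with h | h
      · rw [Finset.mem_insert]; left; exact h
      · rw [Finset.mem_insert, Finset.mem_filter]
        right
        refine ⟨hc.1, ?_⟩
        by_contra hcu
        push_neg at hcu
        exact (hCmem c hc.1).2 ⟨u, v, hadj, hcu, h, Or.inl hu⟩
    calc φ v ≤ (insert v (C.filter (fun c => c ≤ u))).card := Finset.card_le_card hsub
      _ ≤ (C.filter (fun c => c ≤ u)).card + 1 := Finset.card_insert_le _ _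
  -- an edge from u ∈ I to v < a : φ u ≤ 1
  have hE2 : ∀ u v : Fin N, g.Adj u v → u ∈ I → v < a → φ u ≤ 1 := by
    intro u v hadj hu hva
    have hsub : C.filter (fun c => c ≤ u) ⊆ {u} := by
      intro c hc
      rw [Finset.mem_filter] at hc
      rw [Finset.mem_singleton]
      rcases eq_or_lt_of_le hc.2 with h | h
      · exact h
      · exfalso
        have hc' := hCmem c hc.1
        have hca : a ≤ c := by
          have := hc'.1; rw [hI, Finset.mem_Icc] at this; exact this.1
        exact hc'.2 ⟨v, u, hadj.symm, lt_of_lt_of_le hva hca, h, Or.inr hu⟩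
    calc φ u ≤ ({u} : Finset (Fin N)).card := Finset.card_le_card hsub
      _ = 1 := Finset.card_singleton _
  -- an edge from u ∈ I to v > b : φ u = m
  have hE3 : ∀ u v : Fin N, g.Adj u v → u ∈ I → b < v → m ≤ φ u := by
    intro u v hadj hu hbv
    apply Finset.card_le_card
    intro c hc
    rw [Finset.mem_filter]
    refine ⟨hc, ?_⟩
    by_contra hcu
    push_neg at hcu
    have hc' := hCmem c hc
    have hcb : c ≤ b := by
      have := hc'.1; rw [hI, Finset.mem_Icc] at this; exact this.2
    exact hc'.2 ⟨u, v, hadj, hcu, lt_of_le_of_lt hcb hbv, Or.inl hu⟩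
  -- the walk lemma
  have hwalk : ∀ (x y : Fin N) (w : g.Walk x y), y ∉ I → x ∈ I →
      min (φ x) (m - φ x) ≤ w.length := by
    intro x y w
    induction w with
    | nil =>
      intro hy hx; exact absurd hx hy
    | @cons u v z hadj p ih =>
      intro hz hu
      rw [SimpleGraph.Walk.length_cons]
      by_cases hv : v ∈ I
      · have h1 := ih hz hv
        have huv : u ≠ v := hadj.ne
        rcases lt_or_gt_of_ne huv with h | h
        · have h2 := hE1 u v hadj h hu hv
          have h3 := hφmono u v h.le
          have h4 := hφle u
          have h5 := hφle v
          omega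
        · have h2 := hE1 v u hadj.symm h hv hu
          have h3 := hφmono v u h.le
          have h4 := hφle u
          have h5 := hφle v
          omega
      · have hv' : v < a ∨ b < v := by
          rw [hI, Finset.mem_Icc] at hv
          rcases le_or_gt a v with h | h
          · right; by_contra hb; push_neg at hb; exact hv ⟨h, hb⟩
          · left; exact h
        rcases hv' with h | h
        · have := hE2 u v hadj hu h
          omega
        · have := hE3 u v hadj hu h
          omega
  -- distance lower bound
  have hdist : ∀ x ∈ I, ∀ y ∈ I', min (φ x) (m - φ x) ≤ g.dist x y := by
    intro x hx y hy
    have hyI : y ∉ I := fun h => (Finset.disjoint_left.mp hdisj h) hy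
    obtain ⟨p, hp⟩ := (hreach x y).exists_walk_length_eq_dist
    rw [← hp]
    exact hwalk x y p hyI hx
  -- φ is strictly monotone on C
  have hφstrict : ∀ c₁ ∈ C, ∀ c₂ ∈ C, c₁ < c₂ → φ c₁ < φ c₂ := by
    intro c₁ hc₁ c₂ hc₂ h
    apply Finset.card_lt_card
    rw [Finset.ssubset_iff_of_subset]
    · exact ⟨c₂, by rw [Finset.mem_filter]; exact ⟨hc₂, le_refl _⟩,
        by rw [Finset.mem_filter]; push_neg; intro _; exact h⟩
    · intro c hc
      rw [Finset.mem_filter] at hc ⊢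
      exact ⟨hc.1, le_trans hc.2 h.le⟩
  have hφinj : Set.InjOn φ C := by
    intro c₁ hc₁ c₂ hc₂ heq
    by_contra hne
    rcases lt_or_gt_of_ne hne with h | h
    · exact absurd heq (Nat.ne_of_lt (hφstrict c₁ hc₁ c₂ hc₂ h))
    · exact absurd heq.symm (Nat.ne_of_lt (hφstrict c₂ hc₂ c₁ hc₁ h))
  have hφpos : ∀ c ∈ C, 1 ≤ φ c := by
    intro c hc
    apply Finset.card_pos.mpr
    exact ⟨c, by rw [Finset.mem_filter]; exact ⟨hc, le_refl _⟩⟩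
  -- image of C under φ is Icc 1 m
  have himg : C.image φ = Finset.Icc 1 m := by
    apply Finset.eq_of_subset_of_card_le
    · intro i hi
      rw [Finset.mem_image] at hi
      obtain ⟨c, hc, rfl⟩ := hi
      rw [Finset.mem_Icc]
      exact ⟨hφpos c hc, hφle c⟩
    · rw [Finset.card_image_of_injOn hφinj, Nat.card_Icc]
      omega
  set k : ℕ := T / 3 with hk
  -- the set of "middle" cutpoints
  set D : Finset (Fin N) := C.filter (fun c => k < φ c ∧ φ c + k ≤ m) with hD
  have hDcard : m - 2 * k ≤ D.card := by
    have h1 : D.card = (D.image φ).card := (Finset.card_image_of_injOn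
      (hφinj.mono (fun c hc => (Finset.mem_filter.mp hc).1))).symm
    have h2 : D.image φ = (C.image φ).filter (fun i => k < i ∧ i + k ≤ m) := by
      rw [hD, Finset.filter_image]
    have h3 : (Finset.Icc 1 m).filter (fun i => k < i ∧ i + k ≤ m) = Finset.Icc (k + 1) (m - k) := by
      ext i
      simp only [Finset.mem_filter, Finset.mem_Icc]
      omega
    rw [h1, h2, himg, h3, Nat.card_Icc]
    omega
  have hDI : D ⊆ I := fun c hc =>
    Finset.filter_subset _ _ ((Finset.filter_subset _ _) hc)
  -- each pair (x,y) with x ∈ D, y ∈ I' has distance at least k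
  have hdistk : ∀ x ∈ D, ∀ y ∈ I', k ≤ g.dist x y := by
    intro x hx y hy
    have hxd := Finset.mem_filter.mp hx
    have h := hdist x (hDI hx) y hy
    omega
  -- sum bound
  have hTm : T ≤ m := by rw [hT, hm, hC]; exact min_le_left _ _
  have hTI' : T ≤ I'.card := by
    rw [hT]
    exact le_trans (min_le_right _ _) (Finset.card_filter_le _ _)
  have hsum : D.card * (I'.card * k) ≤ ∑ x ∈ I, ∑ y ∈ I', g.dist x y := by
    calc D.card * (I'.card * k) = ∑ _x ∈ D, (I'.card * k) := by
          rw [Finset.sum_const, smul_eq_mul]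
      _ ≤ ∑ x ∈ D, ∑ y ∈ I', g.dist x y := by
          apply Finset.sum_le_sum
          intro x hx
          calc I'.card * k = ∑ _y ∈ I', k := by rw [Finset.sum_const, smul_eq_mul]
            _ ≤ ∑ y ∈ I', g.dist x y := Finset.sum_le_sum (fun y hy => hdistk x hx y hy)
      _ ≤ ∑ x ∈ I, ∑ y ∈ I', g.dist x y := Finset.sum_le_sum_of_subset hDI
  -- trivial bound: each distance is at least 1
  have hsum1 : I.card * I'.card ≤ ∑ x ∈ I, ∑ y ∈ I', g.dist x y := by
    calc I.card * I'.card = ∑ _x ∈ I, I'.card := by rw [Finset.sum_const, smul_eq_mul]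
      _ ≤ ∑ x ∈ I, ∑ y ∈ I', g.dist x y := by
          apply Finset.sum_le_sum
          intro x hx
          calc I'.card = ∑ _y ∈ I', 1 := by rw [Finset.sum_const, smul_eq_mul, mul_one]
            _ ≤ ∑ y ∈ I', g.dist x y := by
                apply Finset.sum_le_sum
                intro y hy
                have hxy : x ≠ y := by
                  intro h; exact (Finset.disjoint_left.mp hdisj hx) (h ▸ hy)
                exact (hreach x y).pos_dist_of_ne hxy
  have hTIcard : T ≤ I.card := by
    rw [hT]
    exact le_trans (min_le_left _ _) (Finset.card_filter_le _ _)
  -- main natural number inequality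
  have hmain : T ^ 3 ≤ 63 * ∑ x ∈ I, ∑ y ∈ I', g.dist x y := by
    rcases Nat.lt_or_ge T 3 with hTsmall | hTbig
    · have h1 : T ^ 3 ≤ 63 * (T * T) := by nlinarith
      calc T ^ 3 ≤ 63 * (T * T) := h1
        _ ≤ 63 * (I.card * I'.card) := by
            apply Nat.mul_le_mul_left
            exact Nat.mul_le_mul hTIcard hTI'
        _ ≤ 63 * ∑ x ∈ I, ∑ y ∈ I', g.dist x y := Nat.mul_le_mul_left _ hsum1
    · -- T ≥ 3, so k ≥ 1
      have hk1 : 1 ≤ k := by rw [hk]; omega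
      have hkey : T ^ 3 ≤ 63 * ((m - 2 * k) * (I'.card * k)) := by
        have h1 : (T - 2 * k) ≤ m - 2 * k := by omega
        have h2 : T ^ 3 ≤ 63 * ((T - 2 * k) * (T * k)) := by
          obtain ⟨r, hr, hTr⟩ : ∃ r, r < 3 ∧ T = 3 * k + r := ⟨T % 3, Nat.mod_lt _ (by norm_num), by omega⟩
          rw [hTr, show 3 * k + r - 2 * k = k + r by omega]
          have hk3 : 1 ≤ k ^ 3 := Nat.one_le_pow _ _ (by omega)
          have hr3 : r ^ 3 ≤ 8 := le_trans (Nat.pow_le_pow_left (by omega : r ≤ 2) 3) (by norm_num)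
          nlinarith [hk3, hr3, Nat.zero_le (k ^ 2 * r), Nat.zero_le (k * r ^ 2),
            Nat.zero_le (k ^ 3)]
        calc T ^ 3 ≤ 63 * ((T - 2 * k) * (T * k)) := h2
          _ ≤ 63 * ((m - 2 * k) * (I'.card * k)) := by
              apply Nat.mul_le_mul_left
              exact Nat.mul_le_mul h1 (Nat.mul_le_mul_right _ hTI')
      calc T ^ 3 ≤ 63 * ((m - 2 * k) * (I'.card * k)) := hkey
        _ ≤ 63 * (D.card * (I'.card * k)) := by
            apply Nat.mul_le_mul_left
            exact Nat.mul_le_mul_right _ hDcard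
        _ ≤ 63 * ∑ x ∈ I, ∑ y ∈ I', g.dist x y := Nat.mul_le_mul_left _ hsum
  -- conclude in ℝ
  have hcast : ((∑ x ∈ I, ∑ y ∈ I', g.dist x y : ℕ) : ℝ) = ∑ x ∈ I, ∑ y ∈ I', (g.dist x y : ℝ) := by
    push_cast
    rfl
  rw [div_le_iff₀ (by norm_num : (0:ℝ) < 63)]
  rw [← hcast]
  calc ((T : ℝ)) ^ 3 = ((T ^ 3 : ℕ) : ℝ) := by push_cast; ring
    _ ≤ ((63 * ∑ x ∈ I, ∑ y ∈ I', g.dist x y : ℕ) : ℝ) := by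
        exact_mod_cast hmain
    _ = ((∑ x ∈ I, ∑ y ∈ I', g.dist x y : ℕ) : ℝ) * 63 := by push_cast; ring
end

section
/- For every k ∈ ℕ with k ≥ 1 and all sufficiently large N, there exists a graph g ∈ 𝒢_N such that the cost 𝒞(g) = Σ_{e ∈ E(g), |e|>1} |e| is at most (k−1)·N and the diameter of g is at most 3k·N^{1/k}. -/
open scoped Classical

/-- The Euclidean length of an edge of a graph on `Fin N`. -/
def elen {N : ℕ} (e : Sym2 (Fin N)) : ℕ :=
  Sym2.lift ⟨fun (x y : Fin N) => max (x : ℕ) (y : ℕ) - min (x : ℕ) (y : ℕ), fun a b => by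
    simp [Nat.max_comm, Nat.min_comm]⟩ e

/-- The cost of a graph: the sum of the lengths of its edges of length `> 1`. -/
noncomputable def cost {N : ℕ} (g : SimpleGraph (Fin N)) : ℕ :=
  ∑ e ∈ (g.edgeSet.toFinite.toFinset).filter (fun e => 1 < elen e), elen e

/-- The hierarchical graph: unit edges plus shortcuts of length `m^i` between
multiples of `m^i`, for `i < k`. -/
def sg (N m k : ℕ) : SimpleGraph (Fin N) where
  Adj x y := (x : ℕ) ≠ (y : ℕ) ∧
    ∃ i < k, m ^ i ∣ min (x : ℕ) (y : ℕ) ∧ max (x : ℕ) (y : ℕ) - min (x : ℕ) (y : ℕ) = m ^ i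
  symm := by
    refine ⟨?_⟩; rintro x y ⟨h1, i, hik, hdvd, hlen⟩
    refine ⟨h1.symm, i, hik, ?_, ?_⟩
    · rwa [min_comm]
    · rwa [min_comm, max_comm]
  loopless := by refine ⟨?_⟩; rintro x ⟨h1, -⟩; exact h1 rfl

lemma elen_mk {N : ℕ} (x y : Fin N) :
    elen s(x, y) = max (x : ℕ) (y : ℕ) - min (x : ℕ) (y : ℕ) := rfl

lemma sg_adj {N m k : ℕ} (i : ℕ) (hik : i < k) (a : ℕ) (ha : m ^ i ∣ a)
    (hpos : 0 < m ^ i) (h2 : a + m ^ i < N) :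
    (sg N m k).Adj ⟨a, by omega⟩ ⟨a + m ^ i, h2⟩ := by
  refine ⟨?_, i, hik, ?_, ?_⟩
  · show (a : ℕ) ≠ (a + m ^ i : ℕ)
    omega
  · simpa [Nat.min_eq_left (Nat.le_add_right a (m ^ i))] using ha
  · simp [Nat.min_eq_left (Nat.le_add_right a (m ^ i)),
      Nat.max_eq_right (Nat.le_add_right a (m ^ i))]

lemma walk_chain (N m k : ℕ) (i : ℕ) (hik : i < k) (hpos : 0 < m ^ i)
    (a : ℕ) (ha : m ^ i ∣ a) (t : ℕ) (hb : a + t * m ^ i < N) :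
    ∃ p : (sg N m k).Walk ⟨a, lt_of_le_of_lt (Nat.le_add_right _ _) hb⟩
      ⟨a + t * m ^ i, hb⟩, p.length ≤ t := by
  induction t with
  | zero =>
    exact ⟨(SimpleGraph.Walk.nil).copy rfl (Fin.ext (by simp)), by simp⟩
  | succ t ih =>
    have hb' : a + t * m ^ i < N := by
      have : (t + 1) * m ^ i = t * m ^ i + m ^ i := by ring
      omega
    obtain ⟨p, hp⟩ := ih hb'
    have hadj : (sg N m k).Adj ⟨a + t * m ^ i, hb'⟩ ⟨a + t * m ^ i + m ^ i, by
        have : (t + 1) * m ^ i = t * m ^ i + m ^ i := by ring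
        omega⟩ :=
      sg_adj i hik _ (Nat.dvd_add ha (Dvd.intro_left t rfl)) hpos _
    refine ⟨(p.concat hadj).copy rfl (Fin.ext (by simp; ring)), ?_⟩
    simp only [SimpleGraph.Walk.length_copy, SimpleGraph.Walk.length_concat]
    omega

lemma rd_le (mi x : ℕ) : mi * (x / mi) ≤ x := by
  rw [mul_comm]; exact Nat.div_mul_le_self x mi

lemma walk_rd (N m k : ℕ) (hm : 0 < m) (i : ℕ) (hik : i < k) (x : ℕ) (hx : x < N) :
    ∃ p : (sg N m k).Walk ⟨x, hx⟩ ⟨m ^ i * (x / m ^ i), lt_of_le_of_lt (rd_le _ _) hx⟩,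
      p.length ≤ i * (m - 1) := by
  induction i with
  | zero =>
    exact ⟨(SimpleGraph.Walk.nil).copy rfl (Fin.ext (by simp)), by
      simp only [SimpleGraph.Walk.length_copy, SimpleGraph.Walk.length_nil]; omega⟩
  | succ i ih =>
    obtain ⟨p, hp⟩ := ih (by omega)
    have hpos : 0 < m ^ i := Nat.pow_pos hm
    set a := m ^ (i + 1) * (x / m ^ (i + 1)) with hadef
    set t := (x / m ^ i) % m with htdef
    have key : a + t * m ^ i = m ^ i * (x / m ^ i) := by
      have h1 : x / m ^ i / m = x / m ^ (i + 1) := by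
        rw [Nat.div_div_eq_div_mul, pow_succ]
      have h2 : m * (x / m ^ i / m) + (x / m ^ i) % m = x / m ^ i :=
        Nat.div_add_mod _ _
      calc a + t * m ^ i = m ^ (i+1) * (x / m ^ (i+1)) + (x / m ^ i) % m * m ^ i := rfl
        _ = m ^ i * (m * (x / m ^ i / m) + (x / m ^ i) % m) := by rw [h1]; ring
        _ = m ^ i * (x / m ^ i) := by rw [h2]
    have haN : a + t * m ^ i < N := by
      rw [key]; exact lt_of_le_of_lt (rd_le _ _) hx
    have hadvd : m ^ i ∣ a :=
      ⟨m * (x / m ^ (i + 1)), by rw [hadef, pow_succ]; ring⟩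
    obtain ⟨q, hq⟩ := walk_chain N m k i (by omega) hpos a hadvd t haN
    refine ⟨(p.append ((q.reverse).copy (Fin.ext key) rfl)).copy rfl (Fin.ext rfl), ?_⟩
    have ht : t ≤ m - 1 := by
      have := Nat.mod_lt (x / m ^ i) hm
      omega
    simp only [SimpleGraph.Walk.length_copy, SimpleGraph.Walk.length_append,
      SimpleGraph.Walk.length_reverse]
    have : (i + 1) * (m - 1) = i * (m - 1) + (m - 1) := by ring
    omega

lemma dist_bound_aux (N m k : ℕ) (hk : 1 ≤ k) (hm : 1 ≤ m) (hN : N ≤ m ^ k) (x y : Fin N)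
    (hxy : m ^ (k - 1) * ((x : ℕ) / m ^ (k - 1)) ≤ m ^ (k - 1) * ((y : ℕ) / m ^ (k - 1))) :
    (sg N m k).dist x y ≤ (2 * k - 1) * (m - 1) := by
  set i := k - 1 with hidef
  have hik : i < k := by omega
  have hpos : 0 < m ^ i := Nat.pow_pos hm
  set a := m ^ i * ((x : ℕ) / m ^ i) with hadef
  set b := m ^ i * ((y : ℕ) / m ^ i) with hbdef
  obtain ⟨px, hpx⟩ := walk_rd N m k hm i hik x.val x.isLt
  obtain ⟨py, hpy⟩ := walk_rd N m k hm i hik y.val y.isLt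
  have hdvd_a : m ^ i ∣ a := dvd_mul_right _ _
  have hdvd : m ^ i ∣ b - a := Nat.dvd_sub (dvd_mul_right _ _) (dvd_mul_right _ _)
  set s := (b - a) / m ^ i with hsdef
  have hcanc : s * m ^ i = b - a := Nat.div_mul_cancel hdvd
  have hs : a + s * m ^ i = b := by omega
  have hbN : b < N := lt_of_le_of_lt (rd_le _ _) y.isLt
  obtain ⟨pc, hpc⟩ := walk_chain N m k i hik hpos a hdvd_a s (by omega)
  have hsm : s ≤ m - 1 := by
    have hmk : m * m ^ i = m ^ k := by
      rw [← pow_succ']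
      congr 1
      omega
    have h1 : s * m ^ i < m * m ^ i := by omega
    have := Nat.lt_of_mul_lt_mul_right h1
    omega
  have hdl := SimpleGraph.dist_le
    ((px.copy (Fin.eta x x.isLt) rfl).append
      ((pc.copy rfl (Fin.ext hs)).append
        ((py.copy (Fin.eta y y.isLt) rfl).reverse)))
  simp only [SimpleGraph.Walk.length_append, SimpleGraph.Walk.length_copy,
    SimpleGraph.Walk.length_reverse] at hdl
  have heq : (2 * k - 1) * (m - 1) = i * (m - 1) + ((m - 1) + i * (m - 1)) := by
    have h2 : 2 * k - 1 = i + i + 1 := by omega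
    rw [h2]
    ring
  omega

lemma dist_bound (N m k : ℕ) (hk : 1 ≤ k) (hm : 1 ≤ m) (hN : N ≤ m ^ k) (x y : Fin N) :
    (sg N m k).dist x y ≤ (2 * k - 1) * (m - 1) := by
  rcases le_total (m ^ (k - 1) * ((x : ℕ) / m ^ (k - 1)))
      (m ^ (k - 1) * ((y : ℕ) / m ^ (k - 1))) with h | h
  · exact dist_bound_aux N m k hk hm hN x y h
  · rw [SimpleGraph.dist_comm]
    exact dist_bound_aux N m k hk hm hN y x h

/-- The minimum of an edge of a graph on `Fin N`. -/
def emin {N : ℕ} (e : Sym2 (Fin N)) : ℕ :=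
  Sym2.lift ⟨fun (x y : Fin N) => min (x : ℕ) (y : ℕ), fun a b => by
    simp [Nat.min_comm]⟩ e

lemma emin_mk {N : ℕ} (x y : Fin N) :
    emin s(x, y) = min (x : ℕ) (y : ℕ) := rfl

lemma sym2_ext {N : ℕ} (e e' : Sym2 (Fin N)) (h1 : emin e = emin e') (h2 : elen e = elen e') :
    e = e' := by
  induction e using Sym2.ind with | _ x y => ?_
  induction e' using Sym2.ind with | _ x' y' => ?_
  rw [emin_mk, emin_mk] at h1
  rw [elen_mk, elen_mk] at h2
  rw [Sym2.eq_iff]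
  have : ((x : ℕ) = (x' : ℕ) ∧ (y : ℕ) = (y' : ℕ)) ∨
      ((x : ℕ) = (y' : ℕ) ∧ (y : ℕ) = (x' : ℕ)) := by omega
  rcases this with ⟨h, h'⟩ | ⟨h, h'⟩
  · exact Or.inl ⟨Fin.ext h, Fin.ext h'⟩
  · exact Or.inr ⟨Fin.ext h, Fin.ext h'⟩

lemma cost_le (N m k : ℕ) (hm : 2 ≤ m) : cost (sg N m k) ≤ (k - 1) * N := by
  classical
  set F := ((sg N m k).edgeSet.toFinite.toFinset).filter (fun e => 1 < elen e) with hFdef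
  have hedge : ∀ e ∈ F, ∃ i, 1 ≤ i ∧ i < k ∧ elen e = m ^ i ∧ m ^ i ∣ emin e ∧
      emin e + m ^ i < N := by
    intro e he
    rw [hFdef, Finset.mem_filter, Set.Finite.mem_toFinset] at he
    obtain ⟨hes, helen⟩ := he
    induction e using Sym2.ind with | _ x y => ?_
    rw [SimpleGraph.mem_edgeSet] at hes
    obtain ⟨hne, i, hik, hdvd, hlen⟩ := hes
    rw [elen_mk] at helen ⊢
    rw [emin_mk]
    have hmaxN : max (x : ℕ) (y : ℕ) < N := by
      rcases max_cases (x : ℕ) (y : ℕ) with ⟨h, -⟩ | ⟨h, -⟩ <;> rw [h] <;> [exact x.isLt; exact y.isLt]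
    refine ⟨i, ?_, hik, hlen, hdvd, by omega⟩
    by_contra hi
    have : i = 0 := by omega
    rw [this, pow_zero] at hlen
    omega
  have hsub : F ⊆ (Finset.Ico 1 k).biUnion (fun i => F.filter (fun e => elen e = m ^ i)) := by
    intro e he
    obtain ⟨i, h1, h2, h3, -⟩ := hedge e he
    exact Finset.mem_biUnion.2 ⟨i, Finset.mem_Ico.2 ⟨h1, h2⟩, Finset.mem_filter.2 ⟨he, h3⟩⟩
  have hdisj : (↑(Finset.Ico 1 k) : Set ℕ).PairwiseDisjoint
      (fun i => F.filter (fun e => elen e = m ^ i)) := by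
    intro i _ j _ hij
    refine Finset.disjoint_left.2 fun e he he' => ?_
    exact hij (Nat.pow_right_injective hm
      (((Finset.mem_filter.1 he).2.symm.trans (Finset.mem_filter.1 he').2)))
  have hlevel : ∀ i, ∑ e ∈ F.filter (fun e => elen e = m ^ i), elen e ≤ N := by
    intro i
    have hpos : 0 < m ^ i := Nat.pow_pos (by omega)
    set Fi := F.filter (fun e => elen e = m ^ i) with hFi
    have hcard : Fi.card ≤ N / m ^ i := by
      refine Finset.card_le_card_of_injOn (fun e => emin e / m ^ i) ?_ ?_ |>.trans
        (by rw [Finset.card_range])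
      · intro e he
        simp only [hFi, Finset.mem_coe, Finset.mem_filter] at he
        obtain ⟨heF, helen⟩ := he
        obtain ⟨j, -, -, h3, h4, h5⟩ := hedge e heF
        have hij : j = i := Nat.pow_right_injective hm (h3.symm.trans helen)
        subst hij
        rw [Finset.mem_coe, Finset.mem_range]
        obtain ⟨q, hq⟩ := h4
        have hqN : (q + 1) * m ^ j ≤ N := by
          have hexp : (q + 1) * m ^ j = m ^ j * q + m ^ j := by ring
          omega
        have hlt : q + 1 ≤ N / m ^ j := (Nat.le_div_iff_mul_le hpos).2 hqN
        have hqd : emin e / m ^ j = q := by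
          rw [hq, Nat.mul_div_cancel_left _ hpos]
        show emin e / m ^ j < N / m ^ j
        omega
      · intro e he e' he' heq
        have heq' : emin e / m ^ i = emin e' / m ^ i := heq
        simp only [hFi, Finset.coe_filter, Set.mem_setOf_eq] at he he'
        obtain ⟨heF, helen⟩ := he
        obtain ⟨heF', helen'⟩ := he'
        obtain ⟨j, -, -, h3, h4, -⟩ := hedge e heF
        have hij : j = i := Nat.pow_right_injective hm (h3.symm.trans helen)
        subst hij
        obtain ⟨j', -, -, h3', h4', -⟩ := hedge e' heF'
        have hij' : j' = j := Nat.pow_right_injective hm (h3'.symm.trans helen')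
        subst hij'
        have hmineq : emin e = emin e' := by
          have e1 := Nat.mul_div_cancel' h4
          have e2 := Nat.mul_div_cancel' h4'
          rw [← e1, ← e2, heq']
        exact sym2_ext e e' hmineq (helen.trans helen'.symm)
    calc ∑ e ∈ Fi, elen e = ∑ _e ∈ Fi, m ^ i :=
          Finset.sum_congr rfl fun e he => (Finset.mem_filter.1 he).2
      _ = Fi.card * m ^ i := by rw [Finset.sum_const, smul_eq_mul]
      _ ≤ (N / m ^ i) * m ^ i := Nat.mul_le_mul_right _ hcard
      _ ≤ N := Nat.div_mul_le_self N _
  calc cost (sg N m k) = ∑ e ∈ F, elen e := rfl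
    _ ≤ ∑ e ∈ (Finset.Ico 1 k).biUnion (fun i => F.filter (fun e => elen e = m ^ i)),
          elen e := Finset.sum_le_sum_of_subset hsub
    _ = ∑ i ∈ Finset.Ico 1 k, ∑ e ∈ F.filter (fun e => elen e = m ^ i), elen e :=
          Finset.sum_biUnion hdisj
    _ ≤ ∑ _i ∈ Finset.Ico 1 k, N := Finset.sum_le_sum fun i _ => hlevel i
    _ = (k - 1) * N := by rw [Finset.sum_const, smul_eq_mul, Nat.card_Ico]

theorem stmt7 (k : ℕ) (hk : 1 ≤ k) :
    ∃ N₀ : ℕ, ∀ N ≥ N₀, ∃ g : SimpleGraph (Fin N),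
      (∀ x y : Fin N, (x : ℕ) + 1 = (y : ℕ) → g.Adj x y) ∧
      cost g ≤ (k - 1) * N ∧
      ∀ x y : Fin N, (g.dist x y : ℝ) ≤ 3 * k * (N : ℝ) ^ (1 / (k : ℝ)) := by
  refine ⟨2, fun N hN => ?_⟩
  have hex : ∃ m, N ≤ m ^ k := ⟨N, Nat.le_self_pow (by omega) N⟩
  set m := Nat.find hex with hmdef
  have hNm : N ≤ m ^ k := Nat.find_spec hex
  have hm2 : 2 ≤ m := by
    by_contra h
    push_neg at h
    have : m ^ k ≤ 1 := by
      calc m ^ k ≤ 1 ^ k := Nat.pow_le_pow_left (by omega) k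
        _ = 1 := one_pow k
    omega
  have hmin : ¬ N ≤ (m - 1) ^ k := Nat.find_min hex (by omega)
  refine ⟨sg N m k, ?_, cost_le N m k hm2, ?_⟩
  · intro x y hxy
    refine ⟨by omega, 0, by omega, ?_, ?_⟩
    · simp
    · have hx : (x : ℕ) ≤ (y : ℕ) := by omega
      rw [pow_zero, Nat.min_eq_left hx, Nat.max_eq_right hx]
      omega
  · intro x y
    have hd := dist_bound N m k hk (by omega) hNm x y
    set c : ℝ := ((m - 1 : ℕ) : ℝ) with hcdef
    have hc0 : 0 ≤ c := Nat.cast_nonneg _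
    have hck : c ^ k < (N : ℝ) := by
      rw [hcdef, ← Nat.cast_pow]
      exact_mod_cast by omega
    have hkR : (k : ℝ) ≠ 0 := by positivity
    have h3 : ((c ^ k : ℝ)) ^ (1 / (k : ℝ)) = c := by
      rw [← Real.rpow_natCast c k, ← Real.rpow_mul hc0, mul_one_div_cancel hkR, Real.rpow_one]
    have h2 : c ≤ (N : ℝ) ^ (1 / (k : ℝ)) := by
      rw [← h3]
      exact Real.rpow_le_rpow (by positivity) hck.le (by positivity)
    have hN0 : (0 : ℝ) ≤ (N : ℝ) ^ (1 / (k : ℝ)) := Real.rpow_nonneg (Nat.cast_nonneg _) _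
    calc ((sg N m k).dist x y : ℝ) ≤ (((2 * k - 1) * (m - 1) : ℕ) : ℝ) := Nat.cast_le.2 hd
      _ = ((2 * k - 1 : ℕ) : ℝ) * c := by rw [Nat.cast_mul, hcdef]
      _ ≤ (3 * k : ℝ) * ((N : ℝ) ^ (1 / (k : ℝ))) := by
          refine mul_le_mul ?_ h2 hc0 (by positivity)
          calc ((2 * k - 1 : ℕ) : ℝ) ≤ ((3 * k : ℕ) : ℝ) := Nat.cast_le.2 (by omega)
            _ = (3 * k : ℝ) := by push_cast; ring
      _ = 3 * k * ((N : ℝ) ^ (1 / (k : ℝ))) := rfl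
end

section
/- Let p ∈ [1,∞), η > 0, σ ≥ η, and let g ∈ 𝒢_N satisfy ℋ_p(g) ≤ N^η. Call a vertex x ∈ V_N irregular if d_g(x,y) > N^σ for every y ∈ V_N with |y − x| ≥ N/4. Then the number of irregular vertices is at most 2·N^{1 − p(σ−η)}. -/
open scoped Classical

/-- The ℓ^p-average path length of a graph on `Fin N`. -/
noncomputable def Hp {N : ℕ} (g : SimpleGraph (Fin N)) (p : ℝ) : ℝ :=
  ((∑ x : Fin N, ∑ y : Fin N, (g.dist x y : ℝ) ^ p) / (N : ℝ) ^ 2) ^ (1 / p)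

/-- `x` is irregular: every vertex at Euclidean distance at least `N/4` from
`x` is at graph distance more than `N^σ` from `x`. -/
def Irregular {N : ℕ} (g : SimpleGraph (Fin N)) (σ : ℝ) (x : Fin N) : Prop :=
  ∀ y : Fin N, (N : ℝ) / 4 ≤ |((y : ℕ) : ℝ) - ((x : ℕ) : ℝ)| → (N : ℝ) ^ σ < (g.dist x y : ℝ)

open Finset

lemma dist_cast_real (m n : ℕ) : (Nat.dist m n : ℝ) = |(m:ℝ) - (n:ℝ)| := by
  rcases le_total m n with h | h
  · rw [Nat.dist_eq_sub_of_le h, abs_sub_comm,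
      abs_of_nonneg (sub_nonneg.mpr (Nat.cast_le.mpr h))]
    push_cast [h]; ring
  · rw [Nat.dist_eq_sub_of_le_right h,
      abs_of_nonneg (sub_nonneg.mpr (Nat.cast_le.mpr h))]
    push_cast [h]; ring



lemma good_lb_range (N x : ℕ) (hN : 8 ≤ N) (hx : x < N) :
    (x + 1 - (N+3)/4) + (N - (x + (N+3)/4))
      ≤ ((Finset.range N).filter (fun b => N ≤ 4 * Nat.dist x b)).card := by
  set c := (N + 3) / 4 with hc
  have hL : (Finset.range N).filter (fun b => b + c ≤ x) = Finset.range (x + 1 - c) := by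
    ext b; simp only [Finset.mem_filter, Finset.mem_range]; omega
  have hR : (Finset.range N).filter (fun b => x + c ≤ b) = Finset.Ico (x + c) N := by
    ext b; simp only [Finset.mem_filter, Finset.mem_range, Finset.mem_Ico]; omega
  have hsub : (Finset.range N).filter (fun b => b + c ≤ x) ∪
      (Finset.range N).filter (fun b => x + c ≤ b)
      ⊆ (Finset.range N).filter (fun b => N ≤ 4 * Nat.dist x b) := by
    intro b hb
    simp only [Finset.mem_union, Finset.mem_filter, Finset.mem_range] at *
    have hd : Nat.dist x b = (x - b) + (b - x) := rfl
    rcases hb with ⟨h1, h2⟩ | ⟨h1, h2⟩ <;> exact ⟨h1, by omega⟩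
  have hdisj : Disjoint ((Finset.range N).filter (fun b => b + c ≤ x))
      ((Finset.range N).filter (fun b => x + c ≤ b)) := by
    rw [Finset.disjoint_filter]; intro b _ h1 h2; omega
  have hcard := Finset.card_le_card hsub
  rw [Finset.card_union_of_disjoint hdisj, hL, hR, Finset.card_range, Nat.card_Ico] at hcard
  exact hcard

lemma card_filter_fin (N : ℕ) (p : ℕ → Prop) [DecidablePred p] :
    (Finset.univ.filter (fun b : Fin N => p b.val)).card
      = ((Finset.range N).filter p).card := by
  apply Finset.card_bij (fun b _ => b.val)
  · intro a ha
    simp only [Finset.mem_filter, Finset.mem_range, Finset.mem_univ, true_and] at *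
    exact ⟨a.isLt, ha⟩
  · intro a _ b _ h; exact Fin.val_injective h
  · intro b hb
    simp only [Finset.mem_filter, Finset.mem_range, Finset.mem_univ, true_and] at hb
    exact ⟨⟨b, hb.1⟩, by simp [hb.2], rfl⟩

lemma sum_tsub (c : ℕ) : ∀ n : ℕ, 2 * ∑ x ∈ Finset.range n, (x + 1 - c) = (n - c) * (n + 1 - c) := by
  intro n
  induction n with
  | zero => simp
  | succ n ih =>
    rw [Finset.sum_range_succ, Nat.mul_add, ih]
    rcases le_or_gt (n+1) c with h | h
    · have h1 : n + 1 - c = 0 := by omega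
      have h2 : n - c = 0 := by omega
      simp [h1, h2]
    · have ha1 : n + 1 - c = (n - c) + 1 := by omega
      have ha2 : n + 1 + 1 - c = (n - c) + 2 := by omega
      rw [ha1, ha2]; ring

-- total far-count lower bound
lemma far_total (N : ℕ) (hN : 8 ≤ N) :
    N * N ≤ 2 * ∑ a : Fin N,
      (Finset.univ.filter (fun b : Fin N => N ≤ 4 * Nat.dist a.val b.val)).card := by
  set c := (N + 3) / 4 with hc
  have h1 : ∀ a : Fin N,
      (Finset.univ.filter (fun b : Fin N => N ≤ 4 * Nat.dist a.val b.val)).card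
        = ((Finset.range N).filter (fun b => N ≤ 4 * Nat.dist a.val b)).card :=
    fun a => card_filter_fin N (fun b => N ≤ 4 * Nat.dist a.val b)
  have h2 : ∑ a : Fin N,
      (Finset.univ.filter (fun b : Fin N => N ≤ 4 * Nat.dist a.val b.val)).card
      = ∑ x ∈ Finset.range N, ((Finset.range N).filter (fun b => N ≤ 4 * Nat.dist x b)).card := by
    simp only [h1]
    exact Fin.sum_univ_eq_sum_range (fun x => ((Finset.range N).filter (fun b => N ≤ 4 * Nat.dist x b)).card) N
  rw [h2]
  have h3 : ∑ x ∈ Finset.range N, ((x + 1 - c) + (N - (x + c)))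
      ≤ ∑ x ∈ Finset.range N, ((Finset.range N).filter (fun b => N ≤ 4 * Nat.dist x b)).card := by
    apply Finset.sum_le_sum
    intro x hx
    exact good_lb_range N x hN (Finset.mem_range.mp hx)
  have h4 : ∑ x ∈ Finset.range N, (N - (x + c)) = ∑ x ∈ Finset.range N, (x + 1 - c) := by
    rw [← Finset.sum_range_reflect (fun x => x + 1 - c) N]
    apply Finset.sum_congr rfl
    intro x hx
    rw [Finset.mem_range] at hx
    omega
  rw [Finset.sum_add_distrib, h4] at h3
  have h5 := sum_tsub c N
  have h6 : N * N ≤ 2 * ((N - c) * (N + 1 - c)) := by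
    have ha1 : 3 * N ≤ 4 * (N - c) + 3 := by omega
    have ha2 : N - c + 2 ≤ N := by omega
    have ha3 : N + 1 - c = (N - c) + 1 := by omega
    rw [ha3]
    set A := N - c
    zify at *
    nlinarith [ha1, ha2, sq_nonneg ((A:ℤ) - N), sq_nonneg ((4:ℤ)*A - 3*N)]
  omega

lemma comb (N : ℕ) (hN : 8 ≤ N) (I : Finset (Fin N)) :
    I.card * N ≤ 2 * ((Finset.univ ×ˢ Finset.univ).filter
      (fun ab : Fin N × Fin N =>
        N ≤ 4 * Nat.dist ab.1.val ab.2.val ∧ (ab.1 ∈ I ∨ ab.2 ∈ I))).card := by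
  classical
  rcases Nat.eq_zero_or_pos I.card with hk0 | hkpos
  · rw [hk0]; simp
  set k := I.card with hk
  set U : Finset (Fin N × Fin N) := Finset.univ ×ˢ Finset.univ with hU
  set G : Fin N → ℕ :=
    fun a => (Finset.univ.filter (fun b : Fin N => N ≤ 4 * Nat.dist a.val b.val)).card with hG
  set S : ℕ := ∑ a ∈ I, G a with hS
  set T : ℕ := (U.filter (fun ab : Fin N × Fin N =>
      N ≤ 4 * Nat.dist ab.1.val ab.2.val ∧ (ab.1 ∈ I ∨ ab.2 ∈ I))).card with hT
  set D : ℕ := (U.filter (fun ab : Fin N × Fin N =>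
      N ≤ 4 * Nat.dist ab.1.val ab.2.val ∧ (ab.1 ∈ I ∧ ab.2 ∈ I))).card with hD
  set O : ℕ := (U.filter (fun ab : Fin N × Fin N =>
      N ≤ 4 * Nat.dist ab.1.val ab.2.val ∧ (ab.1 ∉ I ∧ ab.2 ∉ I))).card with hO
  set F : ℕ := (U.filter (fun ab : Fin N × Fin N =>
      N ≤ 4 * Nat.dist ab.1.val ab.2.val)).card with hF
  have hfarne : ∀ a b : Fin N, N ≤ 4 * Nat.dist a.val b.val → a ≠ b := by
    intro a b hf heq
    subst heq
    rw [Nat.dist_self, Nat.mul_zero] at hf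
    omega
  -- G lower bound
  have hGlb : ∀ a : Fin N, N ≤ 2 * G a + 1 := by
    intro a
    have h1 := good_lb_range N a.val hN a.isLt
    have h2 : G a = ((Finset.range N).filter (fun b => N ≤ 4 * Nat.dist a.val b)).card :=
      card_filter_fin N (fun b => N ≤ 4 * Nat.dist a.val b)
    rw [h2]
    have hxN : a.val < N := a.isLt
    omega
  -- S lower bound
  have hSlb : k * N ≤ 2 * S + k := by
    have h1 : ∑ _a ∈ I, N ≤ ∑ a ∈ I, (2 * G a + 1) :=
      Finset.sum_le_sum (fun a _ => hGlb a)
    have h2 : ∑ a ∈ I, (2 * G a + 1) = 2 * S + k := by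
      rw [Finset.sum_add_distrib, Finset.sum_const, smul_eq_mul, mul_one,
        ← Finset.mul_sum, hS, hk]
    rw [Finset.sum_const, smul_eq_mul, ← hk] at h1
    rw [← h2]
    exact h1
  -- SA = S
  have hSA : (U.filter (fun ab : Fin N × Fin N =>
      N ≤ 4 * Nat.dist ab.1.val ab.2.val ∧ ab.1 ∈ I)).card = S := by
    rw [Finset.card_filter, hU, Finset.sum_product]
    have h1 : ∀ a : Fin N, (∑ b : Fin N,
        if N ≤ 4 * Nat.dist a.val b.val ∧ a ∈ I then 1 else 0)
        = if a ∈ I then G a else 0 := by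
      intro a
      by_cases h : a ∈ I
      · simp only [h, and_true, if_true]
        simp only [hG]; rw [Finset.card_filter]
      · simp [h]
    simp only [h1]
    rw [Finset.sum_ite_mem, Finset.univ_inter]
  -- SB = S
  have hSB : (U.filter (fun ab : Fin N × Fin N =>
      N ≤ 4 * Nat.dist ab.1.val ab.2.val ∧ ab.2 ∈ I)).card = S := by
    rw [Finset.card_filter, hU, Finset.sum_product]
    rw [Finset.sum_comm]
    have h1 : ∀ b : Fin N, (∑ a : Fin N,
        if N ≤ 4 * Nat.dist a.val b.val ∧ b ∈ I then 1 else 0)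
        = if b ∈ I then G b else 0 := by
      intro b
      by_cases h : b ∈ I
      · simp only [h, and_true, if_true]
        simp only [hG]; rw [Finset.card_filter]
        apply Finset.sum_congr rfl
        intro a _
        rw [Nat.dist_comm]
      · simp [h]
    simp only [h1]
    rw [Finset.sum_ite_mem, Finset.univ_inter]
  -- e1 : T + D = S + S
  have e1 : T + D = S + S := by
    rw [hT, hD]
    nth_rewrite 2 [← hSB]
    nth_rewrite 1 [← hSA]
    rw [Finset.card_filter, Finset.card_filter, Finset.card_filter, Finset.card_filter,
      ← Finset.sum_add_distrib, ← Finset.sum_add_distrib]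
    apply Finset.sum_congr rfl
    intro ab _
    by_cases hf : N ≤ 4 * Nat.dist ab.1.val ab.2.val <;>
      by_cases h1 : ab.1 ∈ I <;> by_cases h2 : ab.2 ∈ I <;> simp [hf, h1, h2]
  -- e2 : T + O = F
  have e2 : T + O = F := by
    rw [hT, hO, hF]
    rw [Finset.card_filter, Finset.card_filter, Finset.card_filter,
      ← Finset.sum_add_distrib]
    apply Finset.sum_congr rfl
    intro ab _
    by_cases hf : N ≤ 4 * Nat.dist ab.1.val ab.2.val <;>
      by_cases h1 : ab.1 ∈ I <;> by_cases h2 : ab.2 ∈ I <;> simp [hf, h1, h2]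
  -- D bound
  have hDle : D + k ≤ k * k := by
    have hsub : (U.filter (fun ab : Fin N × Fin N =>
        N ≤ 4 * Nat.dist ab.1.val ab.2.val ∧ (ab.1 ∈ I ∧ ab.2 ∈ I))) ⊆ I.offDiag := by
      intro ab hab
      rw [Finset.mem_filter] at hab
      rw [Finset.mem_offDiag]
      exact ⟨hab.2.2.1, hab.2.2.2, hfarne _ _ hab.2.1⟩
    have h1 : D ≤ k * k - k := by
      rw [hD, hk]
      calc _ ≤ I.offDiag.card := Finset.card_le_card hsub
      _ = I.card * I.card - I.card := Finset.offDiag_card I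
    have h2 : k ≤ k * k := Nat.le_mul_of_pos_left k hkpos
    omega
  -- F lower bound
  have hFlb : N * N ≤ 2 * F := by
    have h1 : F = ∑ a : Fin N, G a := by
      rw [hF, Finset.card_filter, hU, Finset.sum_product]
      apply Finset.sum_congr rfl
      intro a _
      simp only [hG]; rw [Finset.card_filter]
    rw [h1]
    exact far_total N hN
  -- cases
  rcases le_or_gt (2 * k) N with hcase | hcase
  · -- small k
    have hmul : 2 * (k * k) ≤ k * N := by
      calc 2 * (k * k) = k * (2 * k) := by ring
      _ ≤ k * N := Nat.mul_le_mul_left k hcase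
    linarith [e1, hSlb, hDle, hmul]
  · -- large k
    have hkN : k ≤ N := by
      calc k = I.card := hk.symm
      _ ≤ (Finset.univ : Finset (Fin N)).card := Finset.card_le_card (Finset.subset_univ I)
      _ = N := by simp
    set j := N - k with hj
    have hOle : O + j ≤ j * j := by
      have hsub : (U.filter (fun ab : Fin N × Fin N =>
          N ≤ 4 * Nat.dist ab.1.val ab.2.val ∧ (ab.1 ∉ I ∧ ab.2 ∉ I))) ⊆ Iᶜ.offDiag := by
        intro ab hab
        rw [Finset.mem_filter] at hab
        rw [Finset.mem_offDiag, Finset.mem_compl, Finset.mem_compl]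
        exact ⟨hab.2.2.1, hab.2.2.2, hfarne _ _ hab.2.1⟩
      have hcompl : Iᶜ.card = j := by
        rw [Finset.card_compl, Fintype.card_fin, hj, hk]
      have h1 : O ≤ j * j - j := by
        rw [hO]
        calc _ ≤ Iᶜ.offDiag.card := Finset.card_le_card hsub
        _ = Iᶜ.card * Iᶜ.card - Iᶜ.card := Finset.offDiag_card Iᶜ
        _ = j * j - j := by rw [hcompl]
      have h2 : j ≤ j * j := by
        rcases Nat.eq_zero_or_pos j with h | h
        · simp [h]
        · exact Nat.le_mul_of_pos_left j h
      omega
    have h2j : 2 * j ≤ N := by omega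
    have hjm : 2 * (j * j) ≤ j * N := by
      calc 2 * (j * j) = j * (2 * j) := by ring
      _ ≤ j * N := Nat.mul_le_mul_left j h2j
    have hkj : k * N + j * N = N * N := by
      have : k + j = N := by omega
      calc k * N + j * N = (k + j) * N := (Nat.add_mul k j N).symm
      _ = N * N := by rw [this]
    linarith [e2, hFlb, hOle, hjm, hkj]

theorem stmt9 (N : ℕ) (hN : 8 ≤ N) (g : SimpleGraph (Fin N))
    (hground : ∀ x y : Fin N, (x : ℕ) + 1 = (y : ℕ) → g.Adj x y)
    (p η σ : ℝ) (hp : 1 ≤ p) (hη : 0 < η) (hσ : η ≤ σ)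
    (hH : Hp g p ≤ (N : ℝ) ^ η) :
    ((Finset.univ.filter (Irregular g σ)).card : ℝ) ≤ 2 * (N : ℝ) ^ (1 - p * (σ - η)) := by
  classical
  have hNpos : (0:ℝ) < (N:ℝ) := by positivity
  have hp0 : (0:ℝ) < p := lt_of_lt_of_le one_pos hp
  set I : Finset (Fin N) := Finset.univ.filter (Irregular g σ) with hI
  set T : Finset (Fin N × Fin N) := (Finset.univ ×ˢ Finset.univ).filter
      (fun ab : Fin N × Fin N =>
        N ≤ 4 * Nat.dist ab.1.val ab.2.val ∧ (ab.1 ∈ I ∨ ab.2 ∈ I)) with hTdef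
  set Ssum : ℝ := ∑ x : Fin N, ∑ y : Fin N, (g.dist x y : ℝ) ^ p with hSsum
  have hSnn : 0 ≤ Ssum := by
    apply Finset.sum_nonneg; intro x _
    apply Finset.sum_nonneg; intro y _
    exact Real.rpow_nonneg (Nat.cast_nonneg _) p
  have hN2pos : (0:ℝ) < (N:ℝ)^2 := by positivity
  -- upper bound on Ssum
  have hupper : Ssum ≤ (N:ℝ)^2 * (N:ℝ)^(η*p) := by
    have h0 : 0 ≤ Ssum / (N:ℝ)^2 := div_nonneg hSnn hN2pos.le
    have h1 : ((Ssum / (N:ℝ)^2) ^ (1/p) : ℝ) ^ p ≤ ((N:ℝ)^η) ^ p :=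
      Real.rpow_le_rpow (Real.rpow_nonneg h0 _) hH hp0.le
    rw [← Real.rpow_mul h0, one_div_mul_cancel hp0.ne', Real.rpow_one,
      ← Real.rpow_mul hNpos.le] at h1
    rw [mul_comm]; exact (div_le_iff₀ hN2pos).mp h1
  -- lower bound on Ssum
  have hterm : ∀ ab : Fin N × Fin N, ab ∈ T → (N:ℝ)^(σ*p) ≤ (g.dist ab.1 ab.2 : ℝ) ^ p := by
    intro ab hab
    rw [hTdef, Finset.mem_filter] at hab
    obtain ⟨-, hfar, hmem⟩ := hab
    have habs : (N:ℝ) / 4 ≤ |((ab.2.val : ℕ) : ℝ) - ((ab.1.val : ℕ) : ℝ)| := by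
      rw [div_le_iff₀ (by norm_num : (0:ℝ) < 4)]
      have : (N:ℝ) ≤ 4 * (Nat.dist ab.1.val ab.2.val : ℝ) := by exact_mod_cast hfar
      rw [dist_cast_real, abs_sub_comm] at this
      linarith [this]
    have hd : (N:ℝ)^σ < (g.dist ab.1 ab.2 : ℝ) := by
      rcases hmem with h1 | h2
      · rw [hI, Finset.mem_filter] at h1
        exact h1.2 ab.2 habs
      · rw [hI, Finset.mem_filter] at h2
        have := h2.2 ab.1 (by rwa [abs_sub_comm] at habs)
        rwa [SimpleGraph.dist_comm] at this
    calc (N:ℝ)^(σ*p) = ((N:ℝ)^σ)^p := Real.rpow_mul hNpos.le σ p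
    _ ≤ (g.dist ab.1 ab.2 : ℝ) ^ p :=
        Real.rpow_le_rpow (Real.rpow_nonneg hNpos.le σ) hd.le hp0.le
  have hlower : (T.card : ℝ) * (N:ℝ)^(σ*p) ≤ Ssum := by
    have h1 : Ssum = ∑ ab ∈ Finset.univ ×ˢ Finset.univ, (g.dist ab.1 ab.2 : ℝ) ^ p := by
      rw [hSsum, Finset.sum_product]
    have h2 : ∑ ab ∈ T, (g.dist ab.1 ab.2 : ℝ) ^ p
        ≤ ∑ ab ∈ Finset.univ ×ˢ Finset.univ, (g.dist ab.1 ab.2 : ℝ) ^ p := by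
      apply Finset.sum_le_sum_of_subset_of_nonneg
      · rw [hTdef]; exact Finset.filter_subset _ _
      · intro ab _ _; exact Real.rpow_nonneg (Nat.cast_nonneg _) p
    have h3 : (T.card : ℝ) * (N:ℝ)^(σ*p) ≤ ∑ ab ∈ T, (g.dist ab.1 ab.2 : ℝ) ^ p := by
      calc (T.card : ℝ) * (N:ℝ)^(σ*p) = ∑ _ab ∈ T, (N:ℝ)^(σ*p) := by
            rw [Finset.sum_const, nsmul_eq_mul]
      _ ≤ _ := Finset.sum_le_sum hterm
    rw [h1]; exact le_trans h3 h2
  -- combinatorial bound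
  have hcomb : ((I.card : ℕ) : ℝ) * (N:ℝ) ≤ 2 * (T.card : ℝ) := by
    have := comb N hN I
    rw [← hTdef] at this
    exact_mod_cast this
  -- put together
  have hXpos : (0:ℝ) < (N:ℝ)^(σ*p) := Real.rpow_pos_of_pos hNpos _
  have hchain : ((I.card : ℕ) : ℝ) * (N:ℝ) * (N:ℝ)^(σ*p) ≤ 2 * ((N:ℝ)^2 * (N:ℝ)^(η*p)) := by
    calc ((I.card : ℕ) : ℝ) * (N:ℝ) * (N:ℝ)^(σ*p)
        ≤ 2 * (T.card : ℝ) * (N:ℝ)^(σ*p) := mul_le_mul_of_nonneg_right hcomb hXpos.le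
    _ = 2 * ((T.card : ℝ) * (N:ℝ)^(σ*p)) := by ring
    _ ≤ 2 * Ssum := by linarith [hlower]
    _ ≤ 2 * ((N:ℝ)^2 * (N:ℝ)^(η*p)) := by linarith [hupper]
  have hexp : (N:ℝ)^(1 - p*(σ-η)) = (N:ℝ) * (N:ℝ)^(η*p) / (N:ℝ)^(σ*p) := by
    rw [show 1 - p*(σ-η) = (1 + η*p) - σ*p by ring, Real.rpow_sub hNpos,
      Real.rpow_add hNpos, Real.rpow_one]
  rw [hexp, mul_div_assoc']
  rw [le_div_iff₀ hXpos]
  have hstep : ((I.card : ℕ) : ℝ) * (N:ℝ)^(σ*p) * (N:ℝ) ≤ (2 * ((N:ℝ) * (N:ℝ)^(η*p))) * (N:ℝ) := by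
    have hsq : (N:ℝ)^2 = (N:ℝ) * (N:ℝ) := sq (N:ℝ)
    calc ((I.card : ℕ) : ℝ) * (N:ℝ)^(σ*p) * (N:ℝ)
        = ((I.card : ℕ) : ℝ) * (N:ℝ) * (N:ℝ)^(σ*p) := by ring
    _ ≤ 2 * ((N:ℝ)^2 * (N:ℝ)^(η*p)) := hchain
    _ = (2 * ((N:ℝ) * (N:ℝ)^(η*p))) * (N:ℝ) := by rw [hsq]; ring
  exact le_of_mul_le_mul_right hstep hNpos
end

section
/- Fix γ ∈ (0,1]. Let (X_i)_{i≥1} be i.i.d. nonnegative real random variables with E[exp(θ X_1^γ)] < ∞ for some θ > 0. Then for every m > 0 there exists c > 0 such that for all N ≥ 1, P[ Σ_{i=1}^N X_i ≥ (E[X_1] + m)·N ] ≤ exp(−c·N^γ). -/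
open MeasureTheory ProbabilityTheory

lemma aux_pow_le_exp (k : ℕ) (y : ℝ) (hy : 0 ≤ y) :
    y ^ k ≤ (k : ℝ) ^ k * Real.exp y := by
  rcases Nat.eq_zero_or_pos k with hk | hk
  · subst hk; simpa using Real.one_le_exp hy
  · have hkR : (0:ℝ) < k := by exact_mod_cast hk
    have h1 : y / k ≤ Real.exp (y / k) := by
      have := Real.add_one_le_exp (y / k)
      linarith
    have h2 : (y / k) ^ k ≤ (Real.exp (y / k)) ^ k :=
      pow_le_pow_left₀ (by positivity) h1 k
    have h3 : (Real.exp (y / k)) ^ k = Real.exp y := by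
      rw [← Real.exp_nat_mul]
      congr 1
      field_simp
    rw [div_pow, h3, div_le_iff₀ (by positivity)] at h2
    calc y ^ k ≤ Real.exp y * (k:ℝ) ^ k := h2
      _ = (k:ℝ) ^ k * Real.exp y := by ring

lemma aux_poly_le_exp (γ a : ℝ) (hγ : 0 < γ) (ha : 0 < a) (n : ℕ) :
    ∃ K : ℝ, 0 < K ∧ ∀ x : ℝ, 0 ≤ x → x ^ n ≤ K * Real.exp (a * x ^ γ) := by
  set k : ℕ := ⌈(n : ℝ) / γ⌉₊ with hk
  refine ⟨max 1 (((k:ℝ) / a) ^ k), lt_max_of_lt_left one_pos, fun x hx => ?_⟩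
  have hexp1 : 1 ≤ Real.exp (a * x ^ γ) := Real.one_le_exp (by positivity)
  rcases le_or_gt x 1 with hx1 | hx1
  · have h : x ^ n ≤ 1 := pow_le_one₀ hx hx1
    calc x ^ n ≤ 1 := h
      _ ≤ max 1 (((k:ℝ) / a) ^ k) * 1 := by simp
      _ ≤ max 1 (((k:ℝ) / a) ^ k) * Real.exp (a * x ^ γ) :=
          mul_le_mul_of_nonneg_left hexp1 (le_trans zero_le_one (le_max_left _ _))
  · have hxpos : (0:ℝ) < x := lt_trans one_pos hx1
    have hnk : (n : ℝ) ≤ γ * k := by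
      have h := Nat.le_ceil ((n : ℝ) / γ)
      rw [div_le_iff₀ hγ] at h
      calc (n:ℝ) ≤ k * γ := h
        _ = γ * k := by ring
    have h1 : x ^ n ≤ (x ^ γ) ^ k := by
      have e1 : (x ^ γ) ^ k = x ^ (γ * (k:ℝ)) := by
        rw [← Real.rpow_natCast (x ^ γ) k, ← Real.rpow_mul hx]
      have e2 : x ^ n = x ^ ((n:ℝ)) := (Real.rpow_natCast x n).symm
      rw [e1, e2]
      exact Real.rpow_le_rpow_of_exponent_le hx1.le hnk
    have h2 : (x ^ γ) ^ k ≤ ((k:ℝ) / a) ^ k * Real.exp (a * x ^ γ) := by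
      have hy := aux_pow_le_exp k (a * x ^ γ) (by positivity)
      rw [mul_pow] at hy
      rw [div_pow, div_mul_eq_mul_div, le_div_iff₀ (by positivity)]
      calc (x ^ γ) ^ k * a ^ k = a ^ k * (x ^ γ) ^ k := by ring
        _ ≤ (k:ℝ) ^ k * Real.exp (a * x ^ γ) := hy
    calc x ^ n ≤ (x ^ γ) ^ k := h1
      _ ≤ ((k:ℝ) / a) ^ k * Real.exp (a * x ^ γ) := h2
      _ ≤ max 1 (((k:ℝ) / a) ^ k) * Real.exp (a * x ^ γ) :=
          mul_le_mul_of_nonneg_right (le_max_right _ _) (Real.exp_pos _).le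

lemma aux_exp_quad (u : ℝ) (hu : 0 ≤ u) :
    Real.exp u ≤ 1 + u + u ^ 2 * Real.exp u := by
  have h2 : 1 - u ≤ Real.exp (-u) := by
    have := Real.add_one_le_exp (-u); linarith
  have h3 : Real.exp u * Real.exp (-u) = 1 := by
    rw [← Real.exp_add]; simp
  have h4 : Real.exp u * (1 - u) ≤ 1 := by
    calc Real.exp u * (1 - u) ≤ Real.exp u * Real.exp (-u) :=
      mul_le_mul_of_nonneg_left h2 (Real.exp_pos u).le
      _ = 1 := h3
  have h5 : Real.exp u ≤ 1 + u * Real.exp u := by nlinarith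
  nlinarith [mul_le_mul_of_nonneg_left h5 hu]

set_option maxHeartbeats 2000000 in
theorem stmt10 (γ θ : ℝ) (hγ0 : 0 < γ) (hγ1 : γ ≤ 1) (hθ : 0 < θ)
    {Ω : Type*} [MeasurableSpace Ω] (P : Measure Ω) [IsProbabilityMeasure P]
    (X : ℕ → Ω → ℝ) (hmeas : ∀ i, Measurable (X i))
    (hindep : iIndepFun X P)
    (hident : ∀ i, IdentDistrib (X i) (X 0) P P)
    (hnonneg : ∀ i ω, 0 ≤ X i ω)
    (hexp : Integrable (fun ω => Real.exp (θ * (X 0 ω) ^ γ)) P) :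
    ∀ m : ℝ, 0 < m → ∃ c : ℝ, 0 < c ∧ ∀ N : ℕ, 1 ≤ N →
      P {ω | ((∫ x, X 0 x ∂P) + m) * (N : ℝ) ≤ ∑ i ∈ Finset.range N, X i ω}
        ≤ ENNReal.ofReal (Real.exp (-c * (N : ℝ) ^ γ)) := by
  intro m hm
  set μ := ∫ x, X 0 x ∂P with hμdef
  obtain ⟨K, hKpos, hK⟩ := aux_poly_le_exp γ (θ/2) hγ0 (by linarith) 2
  obtain ⟨K₂, hK₂pos, hK₂⟩ := aux_poly_le_exp γ (θ/2) hγ0 (by linarith) 1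
  set C := ∫ ω, Real.exp (θ * X 0 ω ^ γ) ∂P with hCdef
  have hC1 : 1 ≤ C := by
    have h := integral_mono (integrable_const (1:ℝ)) hexp
      (fun ω => Real.one_le_exp (mul_nonneg hθ.le (Real.rpow_nonneg (hnonneg 0 ω) γ)))
    simpa using h
  have hCpos : 0 < C := lt_of_lt_of_le one_pos hC1
  have hXint : Integrable (X 0) P := by
    refine Integrable.mono' (hexp.const_mul K₂) (hmeas 0).aestronglyMeasurable ?_
    filter_upwards with ω
    rw [Real.norm_of_nonneg (hnonneg 0 ω)]
    calc X 0 ω = (X 0 ω) ^ 1 := (pow_one _).symm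
      _ ≤ K₂ * Real.exp (θ/2 * (X 0 ω) ^ γ) := hK₂ _ (hnonneg 0 ω)
      _ ≤ K₂ * Real.exp (θ * (X 0 ω) ^ γ) := by
          apply mul_le_mul_of_nonneg_left (Real.exp_le_exp.mpr ?_) hK₂pos.le
          have : (0:ℝ) ≤ (X 0 ω) ^ γ := Real.rpow_nonneg (hnonneg 0 ω) γ
          nlinarith
  have hXiint : ∀ i, Integrable (X i) P := fun i => (hident i).integrable_iff.mpr hXint
  have hμ0 : 0 ≤ μ := integral_nonneg (fun ω => hnonneg 0 ω)
  set l := min (θ/2) (m/(4*K*C)) with hldef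
  have hlpos : 0 < l := lt_min (by linarith) (by positivity)
  set c0 := min (θ/2) (3/4 * (l*m)) with hc0def
  have hc0pos : 0 < c0 := lt_min (by linarith) (by positivity)
  set A := C * K₂ + 1 with hAdef
  have hA1 : 1 ≤ A := by nlinarith
  -- small-N bound via Markov
  have hsmall : ∀ N : ℕ, 1 ≤ N →
      (P {ω | (μ + m) * (N:ℝ) ≤ ∑ i ∈ Finset.range N, X i ω}).toReal ≤ μ / (μ + m) := by
    intro N hN
    have hNpos : (0:ℝ) < N := by exact_mod_cast hN
    have hint : Integrable (fun ω => ∑ i ∈ Finset.range N, X i ω) P :=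
      integrable_finset_sum _ (fun i _ => hXiint i)
    have hmark := mul_meas_ge_le_integral_of_nonneg
      (Filter.Eventually.of_forall fun ω => Finset.sum_nonneg fun i _ => hnonneg i ω)
      hint ((μ + m) * N)
    have hsum : ∫ ω, (∑ i ∈ Finset.range N, X i ω) ∂P = N * μ := by
      rw [integral_finset_sum _ (fun i _ => hXiint i)]
      rw [Finset.sum_congr rfl (fun i _ => (hident i).integral_eq)]
      simp [Finset.sum_const, Finset.card_range, nsmul_eq_mul, hμdef]
    rw [hsum] at hmark
    set p := (P {ω | (μ + m) * (N:ℝ) ≤ ∑ i ∈ Finset.range N, X i ω}).toReal with hpdef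
    have hp0 : 0 ≤ p := ENNReal.toReal_nonneg
    have h3 : (N:ℝ) * ((μ + m) * p) ≤ (N:ℝ) * μ := by
      calc (N:ℝ) * ((μ + m) * p) = (μ + m) * N * p := by ring
        _ ≤ N * μ := hmark
    have h2 : (μ + m) * p ≤ μ := le_of_mul_le_mul_left h3 hNpos
    rw [le_div_iff₀ (by linarith)]
    nlinarith
  -- main large-deviation bound
  have hmain : ∀ N : ℕ, 1 ≤ N →
      P {ω | (μ + m) * (N:ℝ) ≤ ∑ i ∈ Finset.range N, X i ω}
        ≤ ENNReal.ofReal (A * Real.exp (-c0 * (N:ℝ) ^ γ)) := by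
    intro N hN
    have hN1 : (1:ℝ) ≤ N := by exact_mod_cast hN
    have hNpos : (0:ℝ) < N := by linarith
    have hNγpos : (0:ℝ) < (N:ℝ) ^ γ := Real.rpow_pos_of_pos hNpos γ
    set t := l * (N:ℝ) ^ (γ-1) with htdef
    have hNg1 : (N:ℝ) ^ (γ-1) ≤ 1 := Real.rpow_le_one_of_one_le_of_nonpos hN1 (by linarith)
    have hNgpos : 0 < (N:ℝ) ^ (γ-1) := Real.rpow_pos_of_pos hNpos _
    have htpos : 0 < t := mul_pos hlpos hNgpos
    have hl2 : l ≤ θ/2 := by rw [hldef]; exact min_le_left _ _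
    have ht_le : ∀ x : ℝ, 0 ≤ x → x ≤ N → t * x ≤ θ/2 * x ^ γ := by
      intro x hx hxN
      rcases eq_or_lt_of_le hx with h0 | h0
      · rw [← h0]
        simp [Real.zero_rpow (ne_of_gt hγ0)]
      · have h1 : (N:ℝ) ^ (γ-1) ≤ x ^ (γ-1) :=
          Real.rpow_le_rpow_of_nonpos h0 hxN (by linarith)
        have h2 : x ^ (γ-1) * x = x ^ γ := by
          calc x ^ (γ-1) * x = x ^ (γ-1) * x ^ (1:ℝ) := by rw [Real.rpow_one]
            _ = x ^ (γ-1+1) := (Real.rpow_add h0 _ _).symm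
            _ = x ^ γ := by norm_num
        calc t * x = l * ((N:ℝ) ^ (γ-1) * x) := by rw [htdef]; ring
          _ ≤ θ/2 * (x ^ (γ-1) * x) :=
              mul_le_mul hl2 (mul_le_mul_of_nonneg_right h1 hx) (by positivity) (by linarith)
          _ = θ/2 * x ^ γ := by rw [h2]
    -- truncated variables
    set f : ℝ → ℝ := fun x => if x < (N:ℝ) then x else 0 with hfdef
    have hfmeas : Measurable f :=
      Measurable.ite (measurableSet_lt measurable_id measurable_const) measurable_id
        measurable_const
    set Y : ℕ → Ω → ℝ := fun i => f ∘ X i with hYdef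
    have hYmeas : ∀ i, Measurable (Y i) := fun i => hfmeas.comp (hmeas i)
    have hYval : ∀ i ω, Y i ω = if X i ω < (N:ℝ) then X i ω else 0 := fun i ω => rfl
    have hY0 : ∀ i ω, 0 ≤ Y i ω := by
      intro i ω; rw [hYval]; split_ifs; exacts [hnonneg i ω, le_refl 0]
    have hYleN : ∀ i ω, Y i ω ≤ (N:ℝ) := by
      intro i ω; rw [hYval]; split_ifs with h; exacts [h.le, hNpos.le]
    have hYindep : iIndepFun Y P :=
      hindep.comp (fun _ => f) (fun _ => hfmeas)
    have hYident : ∀ i, IdentDistrib (Y i) (Y 0) P P := fun i => (hident i).comp hfmeas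
    -- event inclusion
    have hincl : {ω | (μ + m) * (N:ℝ) ≤ ∑ i ∈ Finset.range N, X i ω} ⊆
        (⋃ i ∈ Finset.range N, {ω | (N:ℝ) ≤ X i ω}) ∪
          {ω | (μ + m) * (N:ℝ) ≤ ∑ i ∈ Finset.range N, Y i ω} := by
      intro ω hω
      by_cases hall : ∀ i ∈ Finset.range N, X i ω < N
      · refine Set.mem_union_right _ ?_
        have hsum : ∑ i ∈ Finset.range N, Y i ω = ∑ i ∈ Finset.range N, X i ω :=
          Finset.sum_congr rfl fun i hi => by rw [hYval, if_pos (hall i hi)]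
        show (μ + m) * (N:ℝ) ≤ ∑ i ∈ Finset.range N, Y i ω
        rw [hsum]
        exact hω
      · refine Set.mem_union_left _ ?_
        push_neg at hall
        obtain ⟨i, hi, hXi⟩ := hall
        exact Set.mem_biUnion hi hXi
    -- tail bound for a single variable
    have hmgfC : mgf (fun ω => (X 0 ω) ^ γ) P θ = C := by rw [hCdef]; rfl
    have htail : ∀ i : ℕ,
        P {ω | (N:ℝ) ≤ X i ω} ≤ ENNReal.ofReal (Real.exp (-θ * (N:ℝ)^γ) * C) := by
      intro i
      have h2 : P {ω | (N:ℝ) ≤ X i ω} = P {ω | (N:ℝ) ≤ X 0 ω} :=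
        (hident i).measure_mem_eq measurableSet_Ici
      have h3 : {ω | (N:ℝ) ≤ X 0 ω} ⊆ {ω | (N:ℝ)^γ ≤ (X 0 ω)^γ} := fun ω hω =>
        Real.rpow_le_rpow hNpos.le hω hγ0.le
      have h4 := measure_ge_le_exp_mul_mgf (X := fun ω => (X 0 ω)^γ) (μ := P)
        ((N:ℝ)^γ) hθ.le hexp
      rw [hmgfC] at h4
      rw [h2]
      calc P {ω | (N:ℝ) ≤ X 0 ω} ≤ P {ω | (N:ℝ)^γ ≤ (X 0 ω)^γ} := measure_mono h3
        _ = ENNReal.ofReal (P {ω | (N:ℝ)^γ ≤ (X 0 ω)^γ}).toReal :=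
            (ENNReal.ofReal_toReal (measure_ne_top _ _)).symm
        _ ≤ ENNReal.ofReal (Real.exp (-θ * (N:ℝ)^γ) * C) := ENNReal.ofReal_le_ofReal h4
    -- Chernoff bound for the truncated sum
    set S := ∑ i ∈ Finset.range N, Y i with hSdef
    have hSapp : ∀ ω, S ω = ∑ i ∈ Finset.range N, Y i ω := fun ω => by
      rw [hSdef]; simp [Finset.sum_apply]
    have hSmeas : Measurable S := by
      have hfe : S = fun ω => ∑ i ∈ Finset.range N, Y i ω := funext hSapp
      rw [hfe]; exact Finset.measurable_sum _ (fun i _ => hYmeas i)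
    have hSle : ∀ ω, S ω ≤ (N:ℝ) * N := by
      intro ω; rw [hSapp]
      calc ∑ i ∈ Finset.range N, Y i ω ≤ ∑ _i ∈ Finset.range N, (N:ℝ) :=
          Finset.sum_le_sum (fun i _ => hYleN i ω)
        _ = (N:ℝ) * N := by simp [Finset.sum_const, Finset.card_range, nsmul_eq_mul]
    have hSint : Integrable (fun ω => Real.exp (t * S ω)) P := by
      refine Integrable.mono' (integrable_const (Real.exp (t * ((N:ℝ)*N)))) ?_ ?_
      · exact ((hSmeas.const_mul t).exp).aestronglyMeasurable
      · filter_upwards with ω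
        rw [Real.norm_of_nonneg (Real.exp_pos _).le]
        exact Real.exp_le_exp.mpr (mul_le_mul_of_nonneg_left (hSle ω) htpos.le)
    have hcher := measure_ge_le_exp_mul_mgf (X := S) (μ := P) ((μ+m) * N) htpos.le hSint
    have hprod : mgf S P t = (mgf (Y 0) P t) ^ N := by
      rw [hSdef, hYindep.mgf_sum hYmeas]
      have heq : ∀ i ∈ Finset.range N, mgf (Y i) P t = mgf (Y 0) P t := by
        intro i _
        exact ((hYident i).comp ((measurable_id.const_mul t).exp)).integral_eq
      rw [Finset.prod_congr rfl heq, Finset.prod_const, Finset.card_range]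
    -- bound on the truncated mgf
    have hmgf0 : mgf (Y 0) P t ≤ 1 + (t * μ + t^2 * (K * C)) := by
      have hpt : ∀ ω, Real.exp (t * Y 0 ω)
          ≤ 1 + t * X 0 ω + t^2 * K * Real.exp (θ * X 0 ω ^ γ) := by
        intro ω
        have hx : 0 ≤ X 0 ω := hnonneg 0 ω
        have hxγ : (0:ℝ) ≤ (X 0 ω) ^ γ := Real.rpow_nonneg hx γ
        have hexp0 : (0:ℝ) < Real.exp (θ * (X 0 ω) ^ γ) := Real.exp_pos _
        rw [hYval]
        split_ifs with hxN
        · have hu : 0 ≤ t * X 0 ω := mul_nonneg htpos.le hx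
          have h1 := aux_exp_quad (t * X 0 ω) hu
          have h2 : t * X 0 ω ≤ θ/2 * (X 0 ω) ^ γ := ht_le _ hx hxN.le
          have h3 : Real.exp (t * X 0 ω) ≤ Real.exp (θ/2 * (X 0 ω) ^ γ) :=
            Real.exp_le_exp.mpr h2
          have h4 : (X 0 ω)^2 ≤ K * Real.exp (θ/2 * (X 0 ω)^γ) := hK _ hx
          have h7 : Real.exp (θ/2*(X 0 ω)^γ) * Real.exp (θ/2*(X 0 ω)^γ)
              = Real.exp (θ * (X 0 ω)^γ) := by
            rw [← Real.exp_add]; ring_nf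
          have h6 : (X 0 ω)^2 * Real.exp (t * X 0 ω)
              ≤ K * Real.exp (θ * (X 0 ω)^γ) := by
            calc (X 0 ω)^2 * Real.exp (t * X 0 ω)
                ≤ (K * Real.exp (θ/2*(X 0 ω)^γ)) * Real.exp (θ/2 * (X 0 ω)^γ) :=
                  mul_le_mul h4 h3 (Real.exp_pos _).le (by positivity)
              _ = K * (Real.exp (θ/2*(X 0 ω)^γ) * Real.exp (θ/2*(X 0 ω)^γ)) := by ring
              _ = K * Real.exp (θ * (X 0 ω)^γ) := by rw [h7]
          have h5 : (t * X 0 ω)^2 * Real.exp (t * X 0 ω)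
              ≤ t^2 * K * Real.exp (θ * (X 0 ω) ^ γ) := by
            calc (t * X 0 ω)^2 * Real.exp (t * X 0 ω)
                = t^2 * ((X 0 ω)^2 * Real.exp (t * X 0 ω)) := by ring
              _ ≤ t^2 * (K * Real.exp (θ * (X 0 ω)^γ)) :=
                  mul_le_mul_of_nonneg_left h6 (by positivity)
              _ = t^2 * K * Real.exp (θ * (X 0 ω)^γ) := by ring
          linarith
        · rw [mul_zero, Real.exp_zero]
          have hu : 0 ≤ t * X 0 ω := mul_nonneg htpos.le hx
          have hq : 0 ≤ t^2 * K * Real.exp (θ * X 0 ω ^ γ) := by positivity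
          linarith
      have hlhs : Integrable (fun ω => Real.exp (t * Y 0 ω)) P := by
        refine Integrable.mono' (integrable_const (Real.exp (t * (N:ℝ)))) ?_ ?_
        · exact (((hYmeas 0).const_mul t).exp).aestronglyMeasurable
        · filter_upwards with ω
          rw [Real.norm_of_nonneg (Real.exp_pos _).le]
          exact Real.exp_le_exp.mpr (mul_le_mul_of_nonneg_left (hYleN 0 ω) htpos.le)
      have hrhs : Integrable
          (fun ω => 1 + t * X 0 ω + t^2 * K * Real.exp (θ * X 0 ω ^ γ)) P :=
        ((integrable_const 1).add (hXint.const_mul t)).add (hexp.const_mul (t^2 * K))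
      have hmono := integral_mono hlhs hrhs hpt
      have i1 : Integrable (fun ω => 1 + t * X 0 ω) P :=
        (integrable_const 1).add (hXint.const_mul t)
      have i2 : Integrable (fun ω => t^2 * K * Real.exp (θ * X 0 ω ^ γ)) P :=
        hexp.const_mul (t^2 * K)
      have hint_rhs : ∫ ω, (1 + t * X 0 ω + t^2 * K * Real.exp (θ * X 0 ω ^ γ)) ∂P
          = 1 + (t * μ + t^2 * (K * C)) := by
        rw [integral_add i1 i2, integral_add (integrable_const 1) (hXint.const_mul t),
          integral_const, integral_const_mul, integral_const_mul]
        simp only [measure_univ, probReal_univ, ENNReal.toReal_one, smul_eq_mul, one_mul]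
        rw [hμdef, hCdef]
        ring
      rw [hint_rhs] at hmono
      exact hmono
    have hmgf0nn : 0 ≤ mgf (Y 0) P t := mgf_nonneg
    have humm : 0 ≤ t * μ + t^2 * (K * C) :=
      add_nonneg (mul_nonneg htpos.le hμ0) (by positivity)
    have hpow : (mgf (Y 0) P t) ^ N ≤ Real.exp ((N:ℝ) * (t * μ + t^2 * (K * C))) := by
      have h1 : (mgf (Y 0) P t) ^ N ≤ (1 + (t * μ + t^2 * (K*C))) ^ N :=
        pow_le_pow_left₀ hmgf0nn hmgf0 N
      have h2 : (1 + (t*μ + t^2*(K*C))) ^ N ≤ (Real.exp (t*μ + t^2*(K*C))) ^ N := by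
        apply pow_le_pow_left₀ (by linarith) ?_ N
        have := Real.add_one_le_exp (t*μ + t^2*(K*C)); linarith
      have h3 : (Real.exp (t*μ + t^2*(K*C))) ^ N
          = Real.exp ((N:ℝ) * (t*μ + t^2*(K*C))) := by
        rw [← Real.exp_nat_mul]
      exact le_trans h1 (h2.trans_eq h3)
    -- exponent arithmetic
    have hNN : (N:ℝ)^(γ-1) * N = (N:ℝ)^γ := by
      calc (N:ℝ)^(γ-1) * N = (N:ℝ)^(γ-1) * (N:ℝ)^(1:ℝ) := by rw [Real.rpow_one]
        _ = (N:ℝ)^(γ-1+1) := (Real.rpow_add hNpos _ _).symm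
        _ = (N:ℝ)^γ := by norm_num
    have htmN : t * m * N = l * m * (N:ℝ)^γ := by
      rw [htdef]
      calc l * (N:ℝ)^(γ-1) * m * N = l * m * ((N:ℝ)^(γ-1) * N) := by ring
        _ = l * m * (N:ℝ)^γ := by rw [hNN]
    have ht2 : t^2 * (K*C) * N ≤ l * (m/4) * (N:ℝ)^γ := by
      have h1 : t^2 * N = l^2 * ((N:ℝ)^(γ-1) * ((N:ℝ)^(γ-1) * N)) := by rw [htdef]; ring
      have h2 : (N:ℝ)^(γ-1) * ((N:ℝ)^(γ-1) * N) ≤ (N:ℝ)^γ := by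
        rw [hNN]
        calc (N:ℝ)^(γ-1) * (N:ℝ)^γ ≤ 1 * (N:ℝ)^γ :=
            mul_le_mul_of_nonneg_right hNg1 hNγpos.le
          _ = (N:ℝ)^γ := one_mul _
      have hlKC : l * (K * C) ≤ m/4 := by
        have h := min_le_right (θ/2) (m/(4*K*C))
        rw [← hldef] at h
        rw [le_div_iff₀ (by positivity)] at h
        nlinarith
      calc t^2 * (K*C) * N = (t^2 * N) * (K*C) := by ring
        _ = l^2 * ((N:ℝ)^(γ-1) * ((N:ℝ)^(γ-1)*N)) * (K*C) := by rw [h1]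
        _ ≤ l^2 * (N:ℝ)^γ * (K*C) := by
            apply mul_le_mul_of_nonneg_right
              (mul_le_mul_of_nonneg_left h2 (by positivity)) (by positivity)
        _ = (l * (K*C)) * (l * (N:ℝ)^γ) := by ring
        _ ≤ (m/4) * (l * (N:ℝ)^γ) := mul_le_mul_of_nonneg_right hlKC (by positivity)
        _ = l * (m/4) * (N:ℝ)^γ := by ring
    have htrunc : (P {ω | (μ+m) * (N:ℝ) ≤ ∑ i ∈ Finset.range N, Y i ω}).toReal
        ≤ Real.exp (-(3/4) * (l*m) * (N:ℝ)^γ) := by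
      have hset : {ω | (μ+m) * (N:ℝ) ≤ ∑ i ∈ Finset.range N, Y i ω}
          = {ω | (μ+m) * (N:ℝ) ≤ S ω} := by
        ext ω; simp only [Set.mem_setOf_eq, hSapp]
      rw [hset]
      calc (P {ω | (μ+m)*(N:ℝ) ≤ S ω}).toReal
          ≤ Real.exp (-t * ((μ+m)*N)) * mgf S P t := hcher
        _ ≤ Real.exp (-t * ((μ+m)*N)) * Real.exp ((N:ℝ) * (t*μ + t^2*(K*C))) := by
            rw [hprod]; exact mul_le_mul_of_nonneg_left hpow (Real.exp_pos _).le
        _ = Real.exp (-t*((μ+m)*N) + (N:ℝ)*(t*μ + t^2*(K*C))) := (Real.exp_add _ _).symm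
        _ ≤ Real.exp (-(3/4) * (l*m) * (N:ℝ)^γ) := by
            apply Real.exp_le_exp.mpr
            have harr : -t*((μ+m)*N) + (N:ℝ)*(t*μ + t^2*(K*C))
                = -(t*m*N) + t^2*(K*C)*N := by ring
            rw [harr, htmN]
            linarith [ht2]
    -- assemble
    calc P {ω | (μ+m)*(N:ℝ) ≤ ∑ i ∈ Finset.range N, X i ω}
        ≤ P ((⋃ i ∈ Finset.range N, {ω | (N:ℝ) ≤ X i ω}) ∪
            {ω | (μ+m)*(N:ℝ) ≤ ∑ i ∈ Finset.range N, Y i ω}) := measure_mono hincl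
      _ ≤ P (⋃ i ∈ Finset.range N, {ω | (N:ℝ) ≤ X i ω})
            + P {ω | (μ+m)*(N:ℝ) ≤ ∑ i ∈ Finset.range N, Y i ω} := measure_union_le _ _
      _ ≤ ENNReal.ofReal ((N:ℝ) * (Real.exp (-θ*(N:ℝ)^γ) * C))
            + ENNReal.ofReal (Real.exp (-(3/4)*(l*m)*(N:ℝ)^γ)) := by
          apply add_le_add
          · calc P (⋃ i ∈ Finset.range N, {ω | (N:ℝ) ≤ X i ω})
                ≤ ∑ i ∈ Finset.range N, P {ω | (N:ℝ) ≤ X i ω} :=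
                  measure_biUnion_finset_le _ _
              _ ≤ ∑ _i ∈ Finset.range N, ENNReal.ofReal (Real.exp (-θ*(N:ℝ)^γ) * C) :=
                  Finset.sum_le_sum (fun i _ => htail i)
              _ = (N : ENNReal) * ENNReal.ofReal (Real.exp (-θ*(N:ℝ)^γ) * C) := by
                  rw [Finset.sum_const, Finset.card_range, nsmul_eq_mul]
              _ = ENNReal.ofReal ((N:ℝ) * (Real.exp (-θ*(N:ℝ)^γ) * C)) := by
                  rw [← ENNReal.ofReal_natCast N, ← ENNReal.ofReal_mul (by positivity)]
          · calc P {ω | (μ+m)*(N:ℝ) ≤ ∑ i ∈ Finset.range N, Y i ω}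
                = ENNReal.ofReal
                    (P {ω | (μ+m)*(N:ℝ) ≤ ∑ i ∈ Finset.range N, Y i ω}).toReal :=
                  (ENNReal.ofReal_toReal (measure_ne_top _ _)).symm
              _ ≤ ENNReal.ofReal (Real.exp (-(3/4)*(l*m)*(N:ℝ)^γ)) :=
                  ENNReal.ofReal_le_ofReal htrunc
      _ = ENNReal.ofReal ((N:ℝ) * (Real.exp (-θ*(N:ℝ)^γ) * C)
            + Real.exp (-(3/4)*(l*m)*(N:ℝ)^γ)) :=
          (ENNReal.ofReal_add (by positivity) (by positivity)).symm
      _ ≤ ENNReal.ofReal (A * Real.exp (-c0 * (N:ℝ)^γ)) := by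
          apply ENNReal.ofReal_le_ofReal
          have hb1 : (N:ℝ) * (Real.exp (-θ*(N:ℝ)^γ) * C)
              ≤ C * K₂ * Real.exp (-(θ/2) * (N:ℝ)^γ) := by
            have h1 : (N:ℝ) ≤ K₂ * Real.exp (θ/2 * (N:ℝ)^γ) := by
              have h := hK₂ (N:ℝ) hNpos.le; rwa [pow_one] at h
            have h2 : Real.exp (θ/2*(N:ℝ)^γ) * Real.exp (-θ*(N:ℝ)^γ)
                = Real.exp (-(θ/2) * (N:ℝ)^γ) := by
              rw [← Real.exp_add]; ring_nf
            calc (N:ℝ) * (Real.exp (-θ*(N:ℝ)^γ) * C)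
                ≤ (K₂ * Real.exp (θ/2*(N:ℝ)^γ)) * (Real.exp (-θ*(N:ℝ)^γ) * C) :=
                  mul_le_mul_of_nonneg_right h1 (by positivity)
              _ = C * K₂ * (Real.exp (θ/2*(N:ℝ)^γ) * Real.exp (-θ*(N:ℝ)^γ)) := by ring
              _ = C * K₂ * Real.exp (-(θ/2)*(N:ℝ)^γ) := by rw [h2]
          have hc0a : c0 ≤ θ/2 := by rw [hc0def]; exact min_le_left _ _
          have hc0b : c0 ≤ 3/4 * (l*m) := by rw [hc0def]; exact min_le_right _ _
          have he1 : Real.exp (-(θ/2)*(N:ℝ)^γ) ≤ Real.exp (-c0*(N:ℝ)^γ) := by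
            apply Real.exp_le_exp.mpr
            nlinarith [mul_le_mul_of_nonneg_right hc0a hNγpos.le]
          have he2 : Real.exp (-(3/4)*(l*m)*(N:ℝ)^γ) ≤ Real.exp (-c0*(N:ℝ)^γ) := by
            apply Real.exp_le_exp.mpr
            nlinarith [mul_le_mul_of_nonneg_right hc0b hNγpos.le]
          calc (N:ℝ) * (Real.exp (-θ*(N:ℝ)^γ) * C) + Real.exp (-(3/4)*(l*m)*(N:ℝ)^γ)
              ≤ C * K₂ * Real.exp (-c0*(N:ℝ)^γ) + Real.exp (-c0*(N:ℝ)^γ) := by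
                have h := mul_le_mul_of_nonneg_left he1 (show (0:ℝ) ≤ C*K₂ by positivity)
                linarith [hb1, he2, h]
            _ = A * Real.exp (-c0*(N:ℝ)^γ) := by rw [hAdef]; ring
  -- final assembly
  set ρ : ℝ := μ / (μ + m) with hρdef
  have hρ0 : 0 ≤ ρ := by positivity
  have hρ1 : ρ < 1 := (div_lt_one (by linarith)).mpr (by linarith)
  set ρ' := max ρ (Real.exp (-1)) with hρ'def
  have hρ'0 : 0 < ρ' := lt_of_lt_of_le (Real.exp_pos _) (le_max_right _ _)
  have hρ'1 : ρ' < 1 := max_lt hρ1 (by rw [Real.exp_lt_one_iff]; norm_num)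
  have hlogρ' : Real.log ρ' < 0 := Real.log_neg hρ'0 hρ'1
  set R := max (2 * Real.log A / c0) 0 with hRdef
  have hR0 : 0 ≤ R := le_max_right _ _
  set M : ℕ := ⌈R ^ (1/γ)⌉₊ + 1 with hMdef
  have hM1 : 1 ≤ M := Nat.le_add_left 1 _
  have hMpos : (0:ℝ) < M := by exact_mod_cast hM1
  set c := min (c0/2) ((-Real.log ρ') / (M:ℝ) ^ γ) with hcdef
  have hcpos : 0 < c := by
    apply lt_min (by linarith)
    apply div_pos (by linarith) (Real.rpow_pos_of_pos hMpos γ)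
  refine ⟨c, hcpos, fun N hN => ?_⟩
  have hN1 : (1:ℝ) ≤ N := by exact_mod_cast hN
  have hNpos : (0:ℝ) < N := by linarith
  have hNγpos : (0:ℝ) < (N:ℝ) ^ γ := Real.rpow_pos_of_pos hNpos γ
  rcases le_or_gt N M with hNM | hNM
  · -- small N
    have h1 := hsmall N hN
    have hNMγ : (N:ℝ) ^ γ ≤ (M:ℝ) ^ γ :=
      Real.rpow_le_rpow hNpos.le (by exact_mod_cast hNM) hγ0.le
    have h2 : c * (N:ℝ) ^ γ ≤ -Real.log ρ' := by
      calc c * (N:ℝ) ^ γ ≤ ((-Real.log ρ') / (M:ℝ) ^ γ) * (M:ℝ) ^ γ := by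
            exact mul_le_mul (min_le_right _ _) hNMγ hNγpos.le
              (div_nonneg (by linarith) (Real.rpow_pos_of_pos hMpos γ).le)
        _ = -Real.log ρ' := by
            field_simp
      done
    have h3 : ρ ≤ Real.exp (-c * (N:ℝ) ^ γ) := by
      calc ρ ≤ ρ' := le_max_left _ _
        _ = Real.exp (Real.log ρ') := (Real.exp_log hρ'0).symm
        _ ≤ Real.exp (-c * (N:ℝ) ^ γ) := Real.exp_le_exp.mpr (by linarith)
    calc P _ = ENNReal.ofReal (P {ω | (μ + m) * (N:ℝ) ≤ ∑ i ∈ Finset.range N, X i ω}).toReal :=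
          (ENNReal.ofReal_toReal (measure_ne_top _ _)).symm
      _ ≤ ENNReal.ofReal (Real.exp (-c * (N:ℝ) ^ γ)) :=
          ENNReal.ofReal_le_ofReal (le_trans h1 h3)
  · -- large N
    have h1 := hmain N hN
    refine h1.trans (ENNReal.ofReal_le_ofReal ?_)
    have hNR : R ≤ (N:ℝ) ^ γ := by
      have hstep : R ^ (1/γ) ≤ (N:ℝ) := by
        calc R ^ (1/γ) ≤ (⌈R ^ (1/γ)⌉₊ : ℝ) := Nat.le_ceil _
          _ ≤ (M:ℝ) := by exact_mod_cast Nat.le_succ _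
          _ ≤ (N:ℝ) := by exact_mod_cast hNM.le
      calc R = (R ^ (1/γ)) ^ γ := by
            rw [← Real.rpow_mul hR0, one_div, inv_mul_cancel₀ (ne_of_gt hγ0), Real.rpow_one]
        _ ≤ (N:ℝ) ^ γ := Real.rpow_le_rpow (by positivity) hstep hγ0.le
    have hlogA : Real.log A ≤ (c0/2) * (N:ℝ) ^ γ := by
      have h2 : 2 * Real.log A / c0 ≤ (N:ℝ) ^ γ := le_trans (le_max_left _ _) hNR
      rw [div_le_iff₀ hc0pos] at h2
      nlinarith
    have hApos : 0 < A := by linarith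
    calc A * Real.exp (-c0 * (N:ℝ) ^ γ)
        = Real.exp (Real.log A + -c0 * (N:ℝ) ^ γ) := by
          rw [Real.exp_add, Real.exp_log hApos]
      _ ≤ Real.exp (-c * (N:ℝ) ^ γ) := by
          apply Real.exp_le_exp.mpr
          have hc2 : c ≤ c0/2 := min_le_left _ _
          nlinarith [mul_le_mul_of_nonneg_right hc2 hNγpos.le]
end

section
/- Fix γ < 1 with γ > 0. Under the product measure P_γ on graphs over V_N = {0,...,N-1} where each non-ground edge e is present independently with probability exp(−|e|^γ) and all ground edges are present, there exists C < ∞ (depending only on γ) such that for every α ∈ (0,1) and all sufficiently large N: P_γ[ℋ_∞(𝒢_N) ≤ N^α] ≥ exp(−C·N^{1−α(1−γ)}). -/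
open MeasureTheory ProbabilityTheory

namespace Stmt12Aux

/-- A forced "hub" edge. -/
def fedge (N ℓ a : ℕ) (h1 : a * 2 ^ ℓ < N) (h2 : (a + 1) * 2 ^ ℓ < N) : Sym2 (Fin N) :=
  s(⟨a * 2 ^ ℓ, h1⟩, ⟨(a + 1) * 2 ^ ℓ, h2⟩)

lemma elen_fedge (N ℓ a : ℕ) (h1 : a * 2 ^ ℓ < N) (h2 : (a + 1) * 2 ^ ℓ < N) :
    elen (fedge N ℓ a h1 h2) = 2 ^ ℓ := by
  have hle : a * 2 ^ ℓ ≤ (a + 1) * 2 ^ ℓ := by nlinarith [Nat.pow_pos (n := ℓ) (by norm_num : 0 < 2)]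
  simp only [fedge, elen, Sym2.lift_mk]
  simp [Nat.max_eq_right hle, Nat.min_eq_left hle, Nat.add_mul]

/-- index set for forced edges -/
def sIdx (N m M : ℕ) : Finset ((_ : ℕ) × ℕ) :=
  (Finset.Ico m M).sigma fun ℓ => Finset.range ((N - 1) / 2 ^ ℓ)

lemma sIdx_mem {N m M : ℕ} {p : (_ : ℕ) × ℕ} (hp : p ∈ sIdx N m M) :
    m ≤ p.1 ∧ p.1 < M ∧ (p.2 + 1) * 2 ^ p.1 ≤ N - 1 := by
  rw [sIdx, Finset.mem_sigma, Finset.mem_Ico, Finset.mem_range] at hp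
  refine ⟨hp.1.1, hp.1.2, ?_⟩
  have := Nat.succ_le_of_lt hp.2
  exact (Nat.le_div_iff_mul_le (Nat.pow_pos (a := 2) (by norm_num))).mp this

lemma sIdx_bound2 {N m M : ℕ} (hN : 0 < N) {p : (_ : ℕ) × ℕ} (hp : p ∈ sIdx N m M) :
    (p.2 + 1) * 2 ^ p.1 < N := by
  have := (sIdx_mem hp).2.2; omega

lemma sIdx_bound1 {N m M : ℕ} (hN : 0 < N) {p : (_ : ℕ) × ℕ} (hp : p ∈ sIdx N m M) :
    p.2 * 2 ^ p.1 < N := by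
  have h2 := sIdx_bound2 hN hp
  have : p.2 * 2 ^ p.1 ≤ (p.2 + 1) * 2 ^ p.1 := Nat.mul_le_mul_right _ (by omega)
  omega

/-- The map from indices to forced edges (as elements of the subtype). -/
def gmap (N m M : ℕ) (hN : 0 < N) (hm : 1 ≤ m) (p : {p : (_ : ℕ) × ℕ // p ∈ sIdx N m M}) :
    {e : Sym2 (Fin N) // 1 < elen e} :=
  ⟨fedge N p.1.1 p.1.2 (sIdx_bound1 hN p.2) (sIdx_bound2 hN p.2), by
    rw [elen_fedge]
    have hm' : 1 ≤ p.1.1 := hm.trans (sIdx_mem p.2).1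
    calc 1 < 2 ^ 1 := by norm_num
    _ ≤ 2 ^ p.1.1 := Nat.pow_le_pow_right (by norm_num) hm'⟩

/-- sum over an image is at most the sum over the source, for nonneg weights -/
lemma sum_image_le {α β : Type*} [DecidableEq β] (s : Finset α) (g : α → β) (f : β → ℝ)
    (hf : ∀ b, 0 ≤ f b) : ∑ b ∈ s.image g, f b ≤ ∑ a ∈ s, f (g a) := by
  rw [← Finset.sum_fiberwise_of_maps_to (fun a ha => Finset.mem_image_of_mem g ha)
    (fun a => f (g a))]
  refine Finset.sum_le_sum fun b hb => ?_
  obtain ⟨a, ha, rfl⟩ := Finset.mem_image.mp hb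
  have hmem : a ∈ s.filter fun x => g x = g a := Finset.mem_filter.mpr ⟨ha, rfl⟩
  have := Finset.single_le_sum (f := fun x => f (g x)) (fun i _ => hf _) hmem
  refine le_trans (le_of_eq ?_) this
  simp

open SimpleGraph

variable {N : ℕ}

lemma groundWalk (H : SimpleGraph (Fin N)) (hg : ∀ x y : Fin N, (x : ℕ) + 1 = y → H.Adj x y) :
    ∀ (k : ℕ) (x y : Fin N), (x : ℕ) = (y : ℕ) + k → ∃ p : H.Walk x y, p.length ≤ k := by
  intro k
  induction k with
  | zero =>
    intro x y h
    have : x = y := Fin.ext (by omega)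
    subst this
    exact ⟨Walk.nil, by simp⟩
  | succ k ih =>
    intro x y h
    have hx1 : 1 ≤ (x : ℕ) := by omega
    set x' : Fin N := ⟨(x : ℕ) - 1, lt_of_le_of_lt (Nat.sub_le _ _) x.isLt⟩ with hx'
    have hadj : H.Adj x x' := (hg x' x (by show (x : ℕ) - 1 + 1 = (x : ℕ); omega)).symm
    obtain ⟨p, hp⟩ := ih x' y (by show (x : ℕ) - 1 = (y : ℕ) + k; omega)
    exact ⟨Walk.cons hadj p, by simp only [Walk.length_cons]; omega⟩

/-- floor of `x` to a multiple of `2 ^ ℓ`, as an element of `Fin N`. -/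
def hubv (ℓ : ℕ) (x : Fin N) : Fin N :=
  ⟨2 ^ ℓ * ((x : ℕ) / 2 ^ ℓ),
    lt_of_le_of_lt (by rw [mul_comm]; exact Nat.div_mul_le_self _ _) x.isLt⟩

lemma climb (H : SimpleGraph (Fin N)) {m M : ℕ}
    (hub : ∀ ℓ a (h1 : a * 2 ^ ℓ < N) (h2 : (a + 1) * 2 ^ ℓ < N), m ≤ ℓ → ℓ < M →
      H.Adj ⟨a * 2 ^ ℓ, h1⟩ ⟨(a + 1) * 2 ^ ℓ, h2⟩)
    (hg : ∀ x y : Fin N, (x : ℕ) + 1 = y → H.Adj x y) :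
    ∀ (j : ℕ), m + j ≤ M → ∀ x : Fin N,
      ∃ p : H.Walk x (hubv (m + j) x), p.length ≤ (x : ℕ) % 2 ^ m + j := by
  intro j
  induction j with
  | zero =>
    intro _ x
    have hx : (x : ℕ) = (hubv (m + 0) x : ℕ) + (x : ℕ) % 2 ^ m := by
      show (x : ℕ) = 2 ^ (m + 0) * ((x : ℕ) / 2 ^ (m + 0)) + (x : ℕ) % 2 ^ m
      rw [Nat.add_zero]
      exact (Nat.div_add_mod (x : ℕ) (2 ^ m)).symm
    obtain ⟨p, hp⟩ := groundWalk H hg ((x : ℕ) % 2 ^ m) x (hubv (m + 0) x) hx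
    exact ⟨p, by omega⟩
  | succ j ih =>
    intro hM x
    show ∃ p : H.Walk x (hubv (m + j + 1) x), p.length ≤ (x : ℕ) % 2 ^ m + j + 1
    set ℓ := m + j with hℓ
    set b := (x : ℕ) / 2 ^ ℓ with hb
    obtain ⟨p, hp⟩ := ih (by omega) x
    have hsucc : (x : ℕ) / 2 ^ (ℓ + 1) = b / 2 := by
      rw [pow_succ]
      exact (Nat.div_div_eq_div_mul (x : ℕ) (2 ^ ℓ) 2).symm
    rcases Nat.even_or_odd b with ⟨c, hc⟩ | ⟨c, hc⟩
    · have heq : hubv ℓ x = hubv (ℓ + 1) x := by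
        apply Fin.ext
        show 2 ^ ℓ * b = 2 ^ (ℓ + 1) * ((x : ℕ) / 2 ^ (ℓ + 1))
        have hb2 : b / 2 = c := by omega
        rw [hsucc, hb2, hc, pow_succ]
        ring
      exact ⟨p.copy rfl heq, by rw [Walk.length_copy]; omega⟩
    · have hb2 : b / 2 = c := by omega
      have h2 : (2 * c + 1) * 2 ^ ℓ < N := by
        have : (2 * c + 1) * 2 ^ ℓ = (hubv ℓ x : ℕ) := by
          show _ = 2 ^ ℓ * b; rw [hc]; ring
        rw [this]; exact (hubv ℓ x).isLt
      have h1 : (2 * c) * 2 ^ ℓ < N := by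
        have : 2 * c * 2 ^ ℓ ≤ (2 * c + 1) * 2 ^ ℓ := Nat.mul_le_mul_right _ (by omega)
        omega
      have e2 : hubv ℓ x = (⟨(2 * c + 1) * 2 ^ ℓ, h2⟩ : Fin N) := by
        apply Fin.ext
        show 2 ^ ℓ * b = (2 * c + 1) * 2 ^ ℓ
        rw [hc]; ring
      have e1 : hubv (ℓ + 1) x = (⟨(2 * c) * 2 ^ ℓ, h1⟩ : Fin N) := by
        apply Fin.ext
        show 2 ^ (ℓ + 1) * ((x : ℕ) / 2 ^ (ℓ + 1)) = 2 * c * 2 ^ ℓ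
        rw [hsucc, hb2, pow_succ]; ring
      have hadj : H.Adj (hubv ℓ x) (hubv (ℓ + 1) x) := by
        rw [e1, e2]
        exact (hub ℓ (2 * c) h1 h2 (by omega) (by omega)).symm
      refine ⟨p.append (Walk.cons hadj Walk.nil), ?_⟩
      rw [Walk.length_append, Walk.length_cons, Walk.length_nil]
      omega

lemma dist_bd (H : SimpleGraph (Fin N)) {m M : ℕ}
    (hub : ∀ ℓ a (h1 : a * 2 ^ ℓ < N) (h2 : (a + 1) * 2 ^ ℓ < N), m ≤ ℓ → ℓ < M →
      H.Adj ⟨a * 2 ^ ℓ, h1⟩ ⟨(a + 1) * 2 ^ ℓ, h2⟩)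
    (hg : ∀ x y : Fin N, (x : ℕ) + 1 = y → H.Adj x y)
    (hmM : m ≤ M) (hN2 : N ≤ 2 ^ M) (hN : 0 < N) (x y : Fin N) :
    H.dist x y ≤ 2 * (2 ^ m + (M - m)) := by
  have hzero : ∀ z : Fin N, hubv M z = (⟨0, hN⟩ : Fin N) := by
    intro z
    apply Fin.ext
    show 2 ^ M * ((z : ℕ) / 2 ^ M) = 0
    rw [Nat.div_eq_of_lt (lt_of_lt_of_le z.isLt hN2)]
    simp
  have hW : ∀ z : Fin N, ∃ p : H.Walk z (⟨0, hN⟩ : Fin N), p.length ≤ 2 ^ m + (M - m) := by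
    intro z
    obtain ⟨p, hp⟩ := climb H hub hg (M - m) (by omega) z
    have he : hubv (m + (M - m)) z = (⟨0, hN⟩ : Fin N) := by
      rw [show m + (M - m) = M by omega]; exact hzero z
    refine ⟨p.copy rfl he, ?_⟩
    rw [Walk.length_copy]
    have := Nat.mod_lt (z : ℕ) (Nat.pow_pos (n := m) (by norm_num : (0:ℕ) < 2))
    omega
  obtain ⟨px, hpx⟩ := hW x
  obtain ⟨py, hpy⟩ := hW y
  have := SimpleGraph.dist_le (px.append py.reverse)
  rw [Walk.length_append, Walk.length_reverse] at this
  omega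

end Stmt12Aux

theorem stmt12 (γ : ℝ) (hγ0 : 0 < γ) (hγ1 : γ < 1) :
    ∃ C : ℝ, 0 < C ∧ ∀ α : ℝ, 0 < α → α < 1 →
      ∃ N₀ : ℕ, ∀ N ≥ N₀,
        ∀ (Ω : Type) [MeasurableSpace Ω] (P : Measure Ω) [IsProbabilityMeasure P]
          (G : Ω → SimpleGraph (Fin N)),
          (∀ ω (x y : Fin N), (x : ℕ) + 1 = (y : ℕ) → (G ω).Adj x y) →
          iIndepSet (fun e : {e : Sym2 (Fin N) // 1 < elen e} =>
            {ω | (e : Sym2 (Fin N)) ∈ (G ω).edgeSet}) P →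
          (∀ e : Sym2 (Fin N), 1 < elen e →
            P {ω | e ∈ (G ω).edgeSet} = ENNReal.ofReal (Real.exp (-(elen e : ℝ) ^ γ))) →
          ENNReal.ofReal (Real.exp (-C * (N : ℝ) ^ (1 - α * (1 - γ))))
            ≤ P {ω | ∀ x y : Fin N, ((G ω).dist x y : ℝ) ≤ (N : ℝ) ^ α} := by
  classical
  open Stmt12Aux Filter in
  have h2r : (0:ℝ) < (2:ℝ) ^ (γ - 1) := Real.rpow_pos_of_pos (by norm_num) _
  have hr1 : (2:ℝ) ^ (γ - 1) < 1 :=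
    Real.rpow_lt_one_of_one_lt_of_neg (by norm_num) (by linarith)
  set r : ℝ := (2:ℝ) ^ (γ - 1) with hrdef
  have hC : (0:ℝ) < 32 * (1 - r)⁻¹ :=
    mul_pos (by norm_num) (inv_pos.mpr (by linarith))
  refine ⟨32 * (1 - r)⁻¹, hC, ?_⟩
  intro α hα0 hα1
  have T1 : Tendsto (fun n : ℕ => (n:ℝ) ^ α) atTop atTop :=
    (tendsto_rpow_atTop hα0).comp tendsto_natCast_atTop_atTop
  have T2 : Tendsto (fun n : ℕ => (n:ℝ) ^ (α/2)) atTop atTop :=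
    (tendsto_rpow_atTop (by linarith)).comp tendsto_natCast_atTop_atTop
  have E0 : ∀ᶠ n : ℕ in atTop, 1 ≤ n := Filter.eventually_ge_atTop 1
  have E1 := T1.eventually_ge_atTop 32
  have E2 := T2.eventually_ge_atTop (32 / α + 13)
  obtain ⟨N₀, hN₀⟩ := Filter.eventually_atTop.mp ((E0.and E1).and E2)
  refine ⟨N₀, ?_⟩
  intro N hN Ω _ P _ G hground hind hprob
  obtain ⟨⟨hN1, h32⟩, hα2⟩ := hN₀ N hN
  clear T1 T2 E0 E1 E2 hN₀ hN
  have hNpos : 0 < N := hN1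
  have hNR : (1:ℝ) ≤ (N:ℝ) := by exact_mod_cast hN1
  have hN0R : (0:ℝ) < (N:ℝ) := by linarith
  have hNα_pos : (0:ℝ) < (N:ℝ) ^ α := Real.rpow_pos_of_pos hN0R α
  have hNα_le_N : (N:ℝ) ^ α ≤ (N:ℝ) := by
    calc (N:ℝ) ^ α ≤ (N:ℝ) ^ (1:ℝ) :=
          Real.rpow_le_rpow_of_exponent_le hNR (le_of_lt hα1)
    _ = (N:ℝ) := Real.rpow_one _
  obtain ⟨A, hA⟩ : ∃ A : ℕ, A = Nat.floor ((N:ℝ) ^ α) := ⟨_, rfl⟩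
  have hA32 : 32 ≤ A := by
    rw [hA]; exact Nat.le_floor (by exact_mod_cast h32)
  have hAle : (A:ℝ) ≤ (N:ℝ) ^ α := by
    rw [hA]; exact Nat.floor_le (Real.rpow_nonneg (Nat.cast_nonneg N) α)
  have hA1R : (1:ℝ) ≤ (A:ℝ) := by
    have : (1:ℕ) ≤ A := by omega
    exact_mod_cast this
  have hNαA : (N:ℝ) ^ α ≤ 2 * A := by
    have h := Nat.lt_floor_add_one ((N:ℝ) ^ α)
    rw [← hA] at h
    linarith
  have hAN : A ≤ N := by
    have : (A:ℝ) ≤ (N:ℝ) := le_trans hAle hNα_le_N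
    exact_mod_cast this
  obtain ⟨k, hk⟩ : ∃ k : ℕ, k = Nat.log 2 A := ⟨_, rfl⟩
  have hk5 : 5 ≤ k := by
    have h1 : Nat.log 2 32 ≤ Nat.log 2 A := Nat.log_mono_right hA32
    have h2 : Nat.log 2 32 = 5 :=
      Nat.log_eq_of_pow_le_of_lt_pow (by norm_num) (by norm_num)
    omega
  obtain ⟨m, hm⟩ : ∃ m : ℕ, m = k - 3 := ⟨_, rfl⟩
  have hm1 : 1 ≤ m := by omega
  have h2k : 2 ^ k ≤ A := by rw [hk]; exact Nat.pow_log_le_self 2 (by omega)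
  have hAk : A < 2 ^ (k + 1) := by rw [hk]; exact Nat.lt_pow_succ_log_self (by norm_num) A
  have h2m_eq : 2 ^ m * 8 = 2 ^ k := by
    rw [show k = m + 3 by omega, pow_add]; norm_num
  have h2m_ub : ((2:ℝ) ^ m) * 8 ≤ (N:ℝ) ^ α := by
    have h1 : (2 ^ m * 8 : ℕ) ≤ A := h2m_eq ▸ h2k
    have h2 : ((2 ^ m * 8 : ℕ) : ℝ) ≤ (A:ℝ) := by exact_mod_cast h1
    push_cast at h2
    linarith
  have h2m_lb : (N:ℝ) ^ α ≤ 32 * (2:ℝ) ^ m := by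
    have hp : 2 ^ (k + 1) = 2 ^ k * 2 := pow_succ 2 k
    have h1 : A < 2 ^ m * 16 := by omega
    have h2 : (A:ℝ) < ((2 ^ m * 16 : ℕ) : ℝ) := by exact_mod_cast h1
    push_cast at h2
    linarith
  obtain ⟨M, hM⟩ : ∃ M : ℕ, M = Nat.log 2 N + 1 := ⟨_, rfl⟩
  have hmM : m < M := by
    have h2mN : 2 ^ m ≤ N := by
      have : 2 ^ m ≤ 2 ^ k := Nat.pow_le_pow_right (by norm_num) (by omega)
      omega
    have : m ≤ Nat.log 2 N := (Nat.le_log_iff_pow_le (by norm_num) (by omega)).mpr h2mN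
    omega
  have hN2M : N < 2 ^ M := by rw [hM]; exact Nat.lt_pow_succ_log_self (by norm_num) N
  -- budget
  have hbudget : ((2 * (2 ^ m + (M - m)) : ℕ) : ℝ) ≤ (N:ℝ) ^ α := by
    obtain ⟨u, hu⟩ : ∃ u : ℝ, u = (N:ℝ) ^ (α/2) := ⟨_, rfl⟩
    rw [← hu] at hα2
    have hu0 : (0:ℝ) < u := by rw [hu]; exact Real.rpow_pos_of_pos hN0R _
    have huu : (N:ℝ) ^ α = u * u := by
      rw [hu, ← Real.rpow_add hN0R]
      congr 1
      ring
    have h13 : (13:ℝ) ≤ u := by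
      have : (0:ℝ) < 32 / α := by positivity
      linarith
    have hlogN : (Nat.log 2 N : ℝ) * Real.log 2 ≤ Real.log N := by
      have h1 : ((2:ℝ)) ^ (Nat.log 2 N) ≤ (N:ℝ) := by
        exact_mod_cast Nat.pow_log_le_self 2 (by omega)
      have h2 : Real.log ((2:ℝ) ^ (Nat.log 2 N)) ≤ Real.log N :=
        Real.log_le_log (by positivity) h1
      rw [Real.log_pow] at h2
      linarith
    have hlog2 : (1:ℝ)/2 ≤ Real.log 2 := by
      have := Real.log_two_gt_d9
      linarith
    have hlogN' : (Nat.log 2 N : ℝ) ≤ 2 * Real.log N := by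
      have h0 : (0:ℝ) ≤ (Nat.log 2 N : ℝ) := Nat.cast_nonneg _
      have := mul_le_mul_of_nonneg_left hlog2 h0
      linarith
    have hlogu : Real.log N ≤ u / (α/2) := by
      rw [hu]; exact Real.log_le_rpow_div (Nat.cast_nonneg N) (by linarith)
    have he : u / (α/2) = 2 * (u/α) := by
      field_simp
    have hlogfin : (Nat.log 2 N : ℝ) ≤ 4 * (u/α) := by
      rw [he] at hlogu
      linarith
    have hM4 : ((M - m : ℕ):ℝ) ≤ 4 * (u/α) + 1 := by
      calc ((M - m : ℕ):ℝ) ≤ (M:ℝ) := by exact_mod_cast Nat.sub_le M m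
      _ = (Nat.log 2 N : ℝ) + 1 := by rw [hM]; push_cast; ring
      _ ≤ 4 * (u/α) + 1 := by linarith
    have hx : 4 * (u/α) ≤ u * u / 8 := by
      have h1 : 32/α ≤ u := by linarith
      have h2 := mul_le_mul_of_nonneg_right h1 (by positivity : (0:ℝ) ≤ u/8)
      have h3 : 32/α * (u/8) = 4*(u/α) := by ring
      have h4 : u * (u/8) = u * u / 8 := by ring
      rw [h3, h4] at h2
      exact h2
    have hcast : ((2 * (2 ^ m + (M - m)) : ℕ) : ℝ)
        = 2 * (2:ℝ)^m + 2 * ((M - m : ℕ):ℝ) := by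
      push_cast
      ring
    rw [hcast, huu]
    have h169 : (169:ℝ) ≤ u * u := by
      have : (13:ℝ)*13 ≤ u*u := mul_le_mul h13 h13 (by norm_num) (by linarith)
      linarith
    have h2m' : 2 * (2:ℝ)^m ≤ u * u / 4 := by
      rw [← huu]
      linarith
    linarith [hx, hM4, h2m', h169]
  set T : Finset {e : Sym2 (Fin N) // 1 < elen e} :=
    (sIdx N m M).attach.image (gmap N m M hNpos hm1) with hT
  -- inclusion of events
  have hEsub : (⋂ i ∈ T, {ω | (i : Sym2 (Fin N)) ∈ (G ω).edgeSet})
      ⊆ {ω | ∀ x y : Fin N, ((G ω).dist x y : ℝ) ≤ (N:ℝ) ^ α} := by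
    intro ω hω
    simp only [Set.mem_iInter] at hω
    intro x y
    have hub : ∀ ℓ a (h1 : a * 2 ^ ℓ < N) (h2 : (a + 1) * 2 ^ ℓ < N), m ≤ ℓ → ℓ < M →
        (G ω).Adj ⟨a * 2 ^ ℓ, h1⟩ ⟨(a + 1) * 2 ^ ℓ, h2⟩ := by
      intro ℓ a h1 h2 hlo hhi
      have hpmem : (⟨ℓ, a⟩ : (_ : ℕ) × ℕ) ∈ sIdx N m M := by
        rw [sIdx, Finset.mem_sigma, Finset.mem_Ico, Finset.mem_range]
        refine ⟨⟨hlo, hhi⟩, ?_⟩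
        have hle : (a + 1) * 2 ^ ℓ ≤ N - 1 := by omega
        have := (Nat.le_div_iff_mul_le (Nat.pow_pos (n := ℓ) (by norm_num : 0 < 2))).mpr hle
        show a < (N - 1) / 2 ^ ℓ
        omega
      have hi := hω (gmap N m M hNpos hm1 ⟨⟨ℓ, a⟩, hpmem⟩)
        (Finset.mem_image_of_mem _ (Finset.mem_attach _ _))
      exact (SimpleGraph.mem_edgeSet (G ω)).mp hi
    have hd := Stmt12Aux.dist_bd (G ω) hub (hground ω) (le_of_lt hmM) (le_of_lt hN2M)
      hNpos x y
    calc ((G ω).dist x y : ℝ) ≤ ((2 * (2 ^ m + (M - m)) : ℕ) : ℝ) := by exact_mod_cast hd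
    _ ≤ (N:ℝ) ^ α := hbudget
  -- the sum bound
  have hsum : ∑ i ∈ T, ((elen (i : Sym2 (Fin N)) : ℝ)) ^ γ
      ≤ (32 * (1 - r)⁻¹) * (N:ℝ) ^ (1 - α * (1 - γ)) := by
    have h1 : ∑ i ∈ T, ((elen (i : Sym2 (Fin N)) : ℝ)) ^ γ
        ≤ ∑ p ∈ (sIdx N m M).attach,
            ((elen ((gmap N m M hNpos hm1 p : Sym2 (Fin N))) : ℝ)) ^ γ := by
      rw [hT]
      exact sum_image_le _ _ _ (fun b => Real.rpow_nonneg (Nat.cast_nonneg _) _)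
    have h2 : ∑ p ∈ (sIdx N m M).attach,
          ((elen ((gmap N m M hNpos hm1 p : Sym2 (Fin N))) : ℝ)) ^ γ
        = ∑ p ∈ sIdx N m M, ((2:ℝ) ^ p.1) ^ γ := by
      rw [← Finset.sum_attach (sIdx N m M) (fun p => ((2:ℝ) ^ p.1) ^ γ)]
      refine Finset.sum_congr rfl fun p _ => ?_
      have he : elen ((gmap N m M hNpos hm1 p : Sym2 (Fin N))) = 2 ^ (p.1).1 :=
        elen_fedge N (p.1).1 (p.1).2 _ _
      rw [he]
      push_cast
      rfl
    have h3 : ∑ p ∈ sIdx N m M, ((2:ℝ) ^ p.1) ^ γ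
        = ∑ ℓ ∈ Finset.Ico m M, (((N - 1) / 2 ^ ℓ : ℕ) : ℝ) * ((2:ℝ) ^ ℓ) ^ γ := by
      rw [sIdx, Finset.sum_sigma]
      refine Finset.sum_congr rfl fun ℓ _ => ?_
      have hbody : ∀ a ∈ Finset.range ((N - 1) / 2 ^ ℓ),
          ((2:ℝ) ^ ((⟨ℓ, a⟩ : (_ : ℕ) × ℕ)).1) ^ γ = ((2:ℝ) ^ ℓ) ^ γ := fun a _ => rfl
      rw [Finset.sum_congr rfl hbody, Finset.sum_const, Finset.card_range, nsmul_eq_mul]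
    have h4 : ∀ ℓ ∈ Finset.Ico m M,
        (((N - 1) / 2 ^ ℓ : ℕ) : ℝ) * ((2:ℝ) ^ ℓ) ^ γ ≤ (N:ℝ) * r ^ ℓ := by
      intro ℓ _
      have hc : (((N - 1) / 2 ^ ℓ : ℕ) : ℝ) ≤ (N:ℝ) / (2:ℝ) ^ ℓ := by
        calc (((N - 1) / 2 ^ ℓ : ℕ) : ℝ) ≤ ((N - 1 : ℕ) : ℝ) / ((2 ^ ℓ : ℕ) : ℝ) :=
              Nat.cast_div_le
        _ ≤ (N:ℝ) / (2:ℝ) ^ ℓ := by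
            have hnum : ((N - 1 : ℕ) : ℝ) ≤ (N:ℝ) := by exact_mod_cast Nat.sub_le N 1
            have hden : ((2 ^ ℓ : ℕ) : ℝ) = (2:ℝ) ^ ℓ := by push_cast; rfl
            rw [hden]
            gcongr
      have e1 : ((2:ℝ) ^ ℓ) ^ γ = (2:ℝ) ^ ((ℓ:ℝ) * γ) := by
        rw [← Real.rpow_natCast 2 ℓ, ← Real.rpow_mul (by norm_num : (0:ℝ) ≤ 2)]
      have e2 : r ^ ℓ = (2:ℝ) ^ ((γ - 1) * (ℓ:ℝ)) := by
        rw [hrdef, ← Real.rpow_natCast ((2:ℝ) ^ (γ - 1)) ℓ,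
          ← Real.rpow_mul (by norm_num : (0:ℝ) ≤ 2)]
      have e3 : (2:ℝ) ^ ℓ = (2:ℝ) ^ (ℓ:ℝ) := (Real.rpow_natCast 2 ℓ).symm
      have key : (N:ℝ) / (2:ℝ) ^ ℓ * ((2:ℝ) ^ ℓ) ^ γ = (N:ℝ) * r ^ ℓ := by
        rw [e1, e2, e3, div_mul_eq_mul_div, mul_div_assoc,
          ← Real.rpow_sub (by norm_num : (0:ℝ) < 2)]
        congr 2
        ring
      calc (((N - 1) / 2 ^ ℓ : ℕ) : ℝ) * ((2:ℝ) ^ ℓ) ^ γ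
          ≤ (N:ℝ) / (2:ℝ) ^ ℓ * ((2:ℝ) ^ ℓ) ^ γ :=
            mul_le_mul_of_nonneg_right hc (Real.rpow_nonneg (by positivity) _)
      _ = (N:ℝ) * r ^ ℓ := key
    have hgeo : ∑ ℓ ∈ Finset.Ico m M, r ^ ℓ ≤ r ^ m * (1 - r)⁻¹ := by
      have e : ∑ ℓ ∈ Finset.Ico m M, r ^ ℓ = r ^ m * ∑ j ∈ Finset.range (M - m), r ^ j := by
        rw [Finset.sum_Ico_eq_sum_range, Finset.mul_sum]
        exact Finset.sum_congr rfl fun j _ => (pow_add r m j)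
      rw [e]
      refine mul_le_mul_of_nonneg_left ?_ (pow_nonneg h2r.le m)
      rw [← tsum_geometric_of_lt_one h2r.le hr1]
      exact Summable.sum_le_tsum _ (fun i _ => (pow_pos h2r i).le)
        (summable_geometric_of_lt_one h2r.le hr1)
    have hrm : r ^ m ≤ ((N:ℝ) ^ α / 32) ^ (γ - 1) := by
      have e : r ^ m = ((2:ℝ) ^ m) ^ (γ - 1) := by
        rw [hrdef, ← Real.rpow_natCast ((2:ℝ) ^ (γ - 1)) m,
          ← Real.rpow_mul (by norm_num : (0:ℝ) ≤ 2),
          ← Real.rpow_natCast (2:ℝ) m, ← Real.rpow_mul (by norm_num : (0:ℝ) ≤ 2)]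
        congr 1
        ring
      rw [e]
      exact Real.rpow_le_rpow_of_nonpos (div_pos hNα_pos (by norm_num))
        (by linarith [h2m_lb]) (by linarith)
    have hC1 : ((N:ℝ) ^ α / 32) ^ (γ - 1) = ((N:ℝ) ^ α) ^ (γ - 1) * (32:ℝ) ^ (1 - γ) := by
      rw [Real.div_rpow hNα_pos.le (by norm_num : (0:ℝ) ≤ 32), div_eq_mul_inv,
        ← Real.rpow_neg (by norm_num : (0:ℝ) ≤ 32)]
      congr 2
      ring
    have hC2 : (N:ℝ) * ((N:ℝ) ^ α) ^ (γ - 1) = (N:ℝ) ^ (1 - α * (1 - γ)) := by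
      have e : ((N:ℝ) ^ α) ^ (γ - 1) = (N:ℝ) ^ (α * (γ - 1)) :=
        (Real.rpow_mul hN0R.le α (γ - 1)).symm
      rw [e, show (1 - α * (1 - γ)) = 1 + α * (γ - 1) by ring,
        Real.rpow_add hN0R, Real.rpow_one]
    have h32γ : (32:ℝ) ^ (1 - γ) ≤ 32 := by
      calc (32:ℝ) ^ (1 - γ) ≤ (32:ℝ) ^ (1:ℝ) :=
            Real.rpow_le_rpow_of_exponent_le (by norm_num) (by linarith)
      _ = 32 := Real.rpow_one _
    have h0 : (0:ℝ) ≤ (1 - r)⁻¹ := inv_nonneg.mpr (by linarith)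
    have hNe : (0:ℝ) ≤ (N:ℝ) ^ (1 - α * (1 - γ)) := Real.rpow_nonneg (Nat.cast_nonneg N) _
    calc ∑ i ∈ T, ((elen (i : Sym2 (Fin N)) : ℝ)) ^ γ
        ≤ ∑ p ∈ sIdx N m M, ((2:ℝ) ^ p.1) ^ γ := h1.trans (le_of_eq h2)
    _ = ∑ ℓ ∈ Finset.Ico m M, (((N - 1) / 2 ^ ℓ : ℕ) : ℝ) * ((2:ℝ) ^ ℓ) ^ γ := h3
    _ ≤ ∑ ℓ ∈ Finset.Ico m M, (N:ℝ) * r ^ ℓ := Finset.sum_le_sum h4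
    _ = (N:ℝ) * ∑ ℓ ∈ Finset.Ico m M, r ^ ℓ := by rw [Finset.mul_sum]
    _ ≤ (N:ℝ) * (r ^ m * (1 - r)⁻¹) :=
          mul_le_mul_of_nonneg_left hgeo (Nat.cast_nonneg N)
    _ ≤ (N:ℝ) * (((N:ℝ) ^ α / 32) ^ (γ - 1) * (1 - r)⁻¹) :=
          mul_le_mul_of_nonneg_left (mul_le_mul_of_nonneg_right hrm h0) (Nat.cast_nonneg N)
    _ = (N:ℝ) ^ (1 - α * (1 - γ)) * ((32:ℝ) ^ (1 - γ) * (1 - r)⁻¹) := by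
          rw [hC1, ← hC2]; ring
    _ ≤ (N:ℝ) ^ (1 - α * (1 - γ)) * (32 * (1 - r)⁻¹) :=
          mul_le_mul_of_nonneg_left (mul_le_mul_of_nonneg_right h32γ h0) hNe
    _ = (32 * (1 - r)⁻¹) * (N:ℝ) ^ (1 - α * (1 - γ)) := mul_comm _ _
  -- conclude
  have hprod := hind.meas_biInter T
  calc ENNReal.ofReal (Real.exp (-(32 * (1 - r)⁻¹) * (N:ℝ) ^ (1 - α * (1 - γ))))
      ≤ ENNReal.ofReal (Real.exp (∑ i ∈ T, -((elen (i : Sym2 (Fin N)) : ℝ)) ^ γ)) := by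
        apply ENNReal.ofReal_le_ofReal
        apply Real.exp_le_exp.mpr
        rw [Finset.sum_neg_distrib]
        linarith [hsum]
  _ = ∏ i ∈ T, P {ω | (i : Sym2 (Fin N)) ∈ (G ω).edgeSet} := by
        rw [Real.exp_sum, ENNReal.ofReal_prod_of_nonneg (fun i _ => (Real.exp_pos _).le)]
        exact Finset.prod_congr rfl fun i hi => (hprob i i.2).symm
  _ = P (⋂ i ∈ T, {ω | (i : Sym2 (Fin N)) ∈ (G ω).edgeSet}) := hprod.symm
  _ ≤ P {ω | ∀ x y : Fin N, ((G ω).dist x y : ℝ) ≤ (N:ℝ) ^ α} := measure_mono hEsub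
end

section
/- For any k ∈ ℕ with k ≥ 1, p ∈ [1,∞], and N large enough, under the measure P_1 (each non-ground edge e present independently with probability exp(−|e|)), one has P_1[ ℋ_p(𝒢_N) ≤ 3k·N^{1/k} ] ≥ exp(−(k−1)·N). -/
open MeasureTheory ProbabilityTheory
open scoped ENNReal

/-- The diameter of a graph on `Fin N`. -/
noncomputable def Hinf {N : ℕ} (g : SimpleGraph (Fin N)) : ℕ :=
  Finset.univ.sup (fun q : Fin N × Fin N => g.dist q.1 q.2)

/-- The ℓ^p-average path length for `p ∈ [1,∞]`. -/
noncomputable def HpE {N : ℕ} (g : SimpleGraph (Fin N)) (p : ℝ≥0∞) : ℝ :=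
  if p = ⊤ then (Hinf g : ℝ) else Hp g p.toReal


open Finset

lemma my_sum_image_le {α β : Type*} [DecidableEq α] [DecidableEq β] (s : Finset α) (f : α → β) (g : β → ℕ) :
    ∑ b ∈ s.image f, g b ≤ ∑ a ∈ s, g (f a) := by
  induction s using Finset.induction_on with
  | empty => simp
  | @insert a s h ih =>
    rw [Finset.image_insert, Finset.sum_insert h]
    by_cases hfa : f a ∈ s.image f
    · rw [Finset.insert_eq_self.mpr hfa]; omega
    · rw [Finset.sum_insert hfa]; omega

-- walk along multiples of s
lemma walk_scale {N : ℕ} (g : SimpleGraph (Fin N)) (s : ℕ)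
    (hadj : ∀ i : ℕ, ∀ (a b : Fin N), (a : ℕ) = i * s → (b : ℕ) = (i+1) * s → g.Adj a b) :
    ∀ (d i : ℕ) (a b : Fin N), (a : ℕ) = i * s → (b : ℕ) = (i + d) * s →
      ∃ w : g.Walk a b, w.length ≤ d := by
  intro d
  induction d with
  | zero =>
    intro i a b ha hb
    rw [Nat.add_zero] at hb
    have : a = b := Fin.ext (by rw [ha, hb])
    subst this
    exact ⟨SimpleGraph.Walk.nil, by simp⟩
  | succ d ih =>
    intro i a b ha hb
    have hb' : (b : ℕ) = (i + d + 1) * s := by rw [hb]; ring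
    have hm : (i + d) * s ≤ (i + d + 1) * s := Nat.mul_le_mul_right _ (by omega)
    have hmlt : (i + d) * s < N := lt_of_le_of_lt (hb' ▸ hm) b.isLt
    set c : Fin N := ⟨(i + d) * s, hmlt⟩ with hc
    have hadjcb : g.Adj c b := hadj (i + d) c b rfl hb'
    obtain ⟨w, hw⟩ := ih i a c ha rfl
    exact ⟨w.concat hadjcb, by rw [SimpleGraph.Walk.length_concat]; omega⟩

def mfin {N : ℕ} (x : Fin N) (s : ℕ) : Fin N :=
  ⟨(x : ℕ) / s * s, lt_of_le_of_lt (Nat.div_mul_le_self _ _) x.isLt⟩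

lemma descent {N : ℕ} (g : SimpleGraph (Fin N)) (L K : ℕ) (hL : 1 ≤ L)
    (hadj : ∀ j, j < K → ∀ i : ℕ, ∀ (a b : Fin N),
      (a : ℕ) = i * L^j → (b : ℕ) = (i+1) * L^j → g.Adj a b)
    (x : Fin N) :
    ∀ j ≤ K, ∃ w : g.Walk (mfin x (L^j)) x, w.length ≤ j * (L - 1) := by
  intro j
  induction j with
  | zero =>
    intro _
    have : mfin x (L^0) = x := Fin.ext (by simp [mfin])
    rw [this]
    exact ⟨SimpleGraph.Walk.nil, by simp⟩
  | succ j ih =>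
    intro hjK
    obtain ⟨w, hw⟩ := ih (by omega)
    set q := (x : ℕ) / L^j with hq
    have hqq : (x : ℕ) / L^(j+1) = q / L := by
      rw [hq, pow_succ, ← Nat.div_div_eq_div_mul]
    have ha : ((mfin x (L^(j+1)) : Fin N) : ℕ) = (q / L * L) * L^j := by
      simp only [mfin, hqq]
      rw [pow_succ]; ring
    have hb : ((mfin x (L^j) : Fin N) : ℕ) = (q / L * L + q % L) * L^j := by
      simp only [mfin, ← hq]
      rw [mul_comm (q/L) L, Nat.div_add_mod]
    obtain ⟨w2, hw2⟩ := walk_scale g (L^j)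
      (fun i a b hha hhb => hadj j (by omega) i a b hha hhb)
      (q % L) (q / L * L) (mfin x (L^(j+1))) (mfin x (L^j)) ha hb
    refine ⟨w2.append w, ?_⟩
    rw [SimpleGraph.Walk.length_append]
    have : q % L ≤ L - 1 := by
      have := Nat.mod_lt q (show 0 < L by omega); omega
    calc w2.length + w.length ≤ (L - 1) + j * (L-1) := by omega
      _ = (j+1) * (L-1) := by ring

lemma dist_bound_s14 {N : ℕ} (g : SimpleGraph (Fin N)) (L k : ℕ) (hL : 1 ≤ L) (hk : 1 ≤ k)
    (hN : N ≤ L^k)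
    (hadj : ∀ j, j < k → ∀ i : ℕ, ∀ (a b : Fin N),
      (a : ℕ) = i * L^j → (b : ℕ) = (i+1) * L^j → g.Adj a b)
    (x y : Fin N) :
    g.dist x y ≤ (2*k - 1) * (L - 1) := by
  -- WLOG x/L^(k-1) ≤ y/L^(k-1)
  wlog hxy : (x : ℕ) / L^(k-1) ≤ (y : ℕ) / L^(k-1) with H
  · rw [SimpleGraph.dist_comm]
    exact H g L k hL hk hN hadj y x (by omega)
  obtain ⟨wx, hwx⟩ := descent g L (k-1) hL
    (fun j hj => hadj j (by omega)) x (k-1) le_rfl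
  obtain ⟨wy, hwy⟩ := descent g L (k-1) hL
    (fun j hj => hadj j (by omega)) y (k-1) le_rfl
  set qx := (x : ℕ) / L^(k-1) with hqx
  set qy := (y : ℕ) / L^(k-1) with hqy
  clear_value qx qy
  have hLpos : 0 < L^(k-1) := Nat.pow_pos (by omega)
  have hqyL : qy < L := by
    rw [hqy, Nat.div_lt_iff_lt_mul hLpos]
    calc (y:ℕ) < N := y.isLt
      _ ≤ L^k := hN
      _ = L * L^(k-1) := by rw [← pow_succ']; congr 1; omega
  obtain ⟨wt, hwt⟩ := walk_scale g (L^(k-1))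
    (fun i a b hha hhb => hadj (k-1) (by omega) i a b hha hhb)
    (qy - qx) qx (mfin x (L^(k-1))) (mfin y (L^(k-1)))
    (by simp [mfin, ← hqx]) (by simp [mfin, ← hqy]; congr 1; omega)
  have := SimpleGraph.dist_le ((wx.reverse.append wt).append wy)
  simp only [SimpleGraph.Walk.length_append, SimpleGraph.Walk.length_reverse] at this
  have hsplit : (2*k - 1) * (L-1) = (k-1) * (L-1) + ((L-1) + (k-1) * (L-1)) := by
    have h2 : 2*k - 1 = (k-1) + (1 + (k-1)) := by omega
    rw [h2, add_mul, add_mul, one_mul]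
  have h1 : wt.length ≤ L - 1 := le_trans hwt (by omega)
  omega

lemma dist_le_Hinf {N : ℕ} (g : SimpleGraph (Fin N)) (x y : Fin N) : g.dist x y ≤ Hinf g :=
  Finset.le_sup (f := fun q : Fin N × Fin N => g.dist q.1 q.2) (Finset.mem_univ (x, y))

lemma HpE_le_Hinf {N : ℕ} (hN : 0 < N) (g : SimpleGraph (Fin N)) (p : ℝ≥0∞) (hp : 1 ≤ p) :
    HpE g p ≤ (Hinf g : ℝ) := by
  unfold HpE
  split_ifs with h
  · exact le_refl _
  · have hp' : 1 ≤ p.toReal := by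
      rw [← ENNReal.toReal_one]
      exact ENNReal.toReal_mono h hp
    have hp0 : 0 < p.toReal := by linarith
    set p' := p.toReal
    set D := (Hinf g : ℝ) with hD
    have hD0 : 0 ≤ D := Nat.cast_nonneg _
    have hsum : (∑ x : Fin N, ∑ y : Fin N, (g.dist x y : ℝ) ^ p')
        ≤ (N : ℝ)^2 * D ^ p' := by
      calc (∑ x : Fin N, ∑ y : Fin N, (g.dist x y : ℝ) ^ p')
          ≤ ∑ _x : Fin N, ∑ _y : Fin N, D ^ p' := by
            apply Finset.sum_le_sum; intro x _
            apply Finset.sum_le_sum; intro y _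
            exact Real.rpow_le_rpow (Nat.cast_nonneg _)
              (Nat.cast_le.mpr (dist_le_Hinf g x y)) (le_of_lt hp0)
        _ = (N : ℝ)^2 * D ^ p' := by
            simp [Finset.sum_const]; ring
    have hNpos : (0:ℝ) < (N:ℝ)^2 := by positivity
    have hdiv : (∑ x : Fin N, ∑ y : Fin N, (g.dist x y : ℝ) ^ p') / (N : ℝ)^2 ≤ D ^ p' := by
      rw [div_le_iff₀ hNpos]; linarith [hsum]
    have hnonneg : 0 ≤ (∑ x : Fin N, ∑ y : Fin N, (g.dist x y : ℝ) ^ p') / (N : ℝ)^2 := by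
      apply div_nonneg _ (le_of_lt hNpos)
      apply Finset.sum_nonneg; intro x _
      apply Finset.sum_nonneg; intro y _
      exact Real.rpow_nonneg (Nat.cast_nonneg _) _
    unfold Hp
    calc ((∑ x : Fin N, ∑ y : Fin N, (g.dist x y : ℝ) ^ p') / (N : ℝ)^2) ^ (1/p')
        ≤ (D ^ p') ^ (1/p') := Real.rpow_le_rpow hnonneg hdiv (by positivity)
      _ = D := by
          rw [← Real.rpow_mul hD0, mul_one_div_cancel (ne_of_gt hp0), Real.rpow_one]

def edgeOf {N : ℕ} (L : ℕ) (q : ℕ × ℕ) (h : (q.2 + 1) * L ^ q.1 < N) : Sym2 (Fin N) :=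
  s(⟨q.2 * L ^ q.1, lt_of_le_of_lt (Nat.mul_le_mul_right _ (Nat.le_succ _)) h⟩,
    ⟨(q.2 + 1) * L ^ q.1, h⟩)

lemma elen_edgeOf {N L : ℕ} {q : ℕ × ℕ} (h : (q.2 + 1) * L ^ q.1 < N) :
    elen (edgeOf L q h) = L ^ q.1 := by
  simp only [edgeOf, elen, Sym2.lift_mk]
  have : q.2 * L ^ q.1 ≤ (q.2 + 1) * L ^ q.1 := Nat.mul_le_mul_right _ (Nat.le_succ _)
  rw [Nat.max_eq_right this, Nat.min_eq_left this]
  rw [Nat.add_mul]; omega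

lemma inner_sum_le (N s : ℕ) (hs : 0 < s) :
    ∑ i ∈ Finset.range N, (if (i + 1) * s < N then s else 0) ≤ N - 1 := by
  rw [← Finset.sum_filter]
  have hsub : (Finset.range N).filter (fun i => (i + 1) * s < N) ⊆
      Finset.range ((N - 1) / s) := by
    intro i hi
    simp only [Finset.mem_filter, Finset.mem_range] at hi ⊢
    have : (i + 1) * s ≤ N - 1 := by omega
    have := (Nat.le_div_iff_mul_le hs).mpr this
    omega
  calc ∑ _i ∈ (Finset.range N).filter (fun i => (i + 1) * s < N), s
      = ((Finset.range N).filter (fun i => (i + 1) * s < N)).card * s := by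
        rw [Finset.sum_const, smul_eq_mul]
    _ ≤ ((N - 1) / s) * s := Nat.mul_le_mul_right _ (le_trans (Finset.card_le_card hsub) (by simp))
    _ ≤ N - 1 := Nat.div_mul_le_self _ _

set_option maxHeartbeats 1000000 in
theorem stmt14 (k : ℕ) (hk : 1 ≤ k) (p : ℝ≥0∞) (hp : 1 ≤ p) :
    ∃ N₀ : ℕ, ∀ N ≥ N₀,
      ∀ (Ω : Type) [MeasurableSpace Ω] (P : Measure Ω) [IsProbabilityMeasure P]
        (G : Ω → SimpleGraph (Fin N)),
        (∀ ω (x y : Fin N), (x : ℕ) + 1 = (y : ℕ) → (G ω).Adj x y) →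
        iIndepSet (fun e : {e : Sym2 (Fin N) // 1 < elen e} =>
          {ω | (e : Sym2 (Fin N)) ∈ (G ω).edgeSet}) P →
        (∀ e : Sym2 (Fin N), 1 < elen e →
          P {ω | e ∈ (G ω).edgeSet} = ENNReal.ofReal (Real.exp (-(elen e : ℝ)))) →
        ENNReal.ofReal (Real.exp (-((k : ℝ) - 1) * (N : ℝ)))
          ≤ P {ω | HpE (G ω) p ≤ 3 * (k : ℝ) * (N : ℝ) ^ (1 / (k : ℝ))} := by
  classical
  refine ⟨2, fun N hN Ω _ P _ G hground hindep hprob => ?_⟩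
  have hN2 : 2 ≤ N := hN
  have hk0 : (0:ℝ) < (k:ℝ) := by exact_mod_cast hk
  have hinvk : (0:ℝ) < 1 / (k:ℝ) := by positivity
  set R : ℝ := (N : ℝ) ^ (1 / (k:ℝ)) with hR
  have hR0 : 0 ≤ R := Real.rpow_nonneg (Nat.cast_nonneg _) _
  set L : ℕ := ⌈R⌉₊ with hLdef
  have hL2 : 2 ≤ L := by
    have h1 : (1:ℝ) < R := by
      rw [hR]
      rw [Real.one_lt_rpow_iff_of_pos (by positivity)]
      left
      constructor
      · exact_mod_cast (by omega : 1 < N)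
      · exact hinvk
    have := Nat.lt_ceil.mpr (show ((1:ℕ):ℝ) < R by exact_mod_cast h1)
    omega
  have hL1 : 1 ≤ L := by omega
  have hLk : N ≤ L ^ k := by
    have h1 : R ≤ (L:ℝ) := Nat.le_ceil _
    have h2 : (N:ℝ) ≤ (L:ℝ) ^ (k:ℕ) := by
      calc (N:ℝ) = (R) ^ (k:ℕ) := by
            rw [hR, ← Real.rpow_natCast ((N:ℝ) ^ (1/(k:ℝ))) k, ← Real.rpow_mul (Nat.cast_nonneg _),
              one_div_mul_cancel (ne_of_gt hk0), Real.rpow_one]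
        _ ≤ (L:ℝ) ^ (k:ℕ) := pow_le_pow_left₀ hR0 h1 _
    exact_mod_cast h2
  have hLR : ((L:ℝ)) - 1 ≤ R := by
    have := Nat.ceil_lt_add_one hR0
    rw [← hLdef] at this
    linarith
  -- index set of required edges
  set T : Finset (ℕ × ℕ) :=
    (Finset.Icc 1 (k-1) ×ˢ Finset.range N).filter (fun q => (q.2 + 1) * L ^ q.1 < N) with hT
  have hmemT : ∀ q ∈ T, 1 ≤ q.1 ∧ q.1 ≤ k - 1 ∧ (q.2 + 1) * L ^ q.1 < N := by
    intro q hq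
    rw [hT, Finset.mem_filter, Finset.mem_product, Finset.mem_Icc] at hq
    exact ⟨hq.1.1.1, hq.1.1.2, hq.2⟩
  set f : {q // q ∈ T} → {e : Sym2 (Fin N) // 1 < elen e} := fun q =>
    ⟨edgeOf L q.1 (hmemT q.1 q.2).2.2, by
      rw [elen_edgeOf]
      exact Nat.one_lt_pow (by have := (hmemT q.1 q.2).1; omega) (by omega)⟩ with hf
  set S : Finset {e : Sym2 (Fin N) // 1 < elen e} := T.attach.image f with hS
  -- the probability of the event E that all edges in S are present
  have hPE : P (⋂ e ∈ S, {ω | (e : Sym2 (Fin N)) ∈ (G ω).edgeSet})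
      = ∏ e ∈ S, P {ω | (e : Sym2 (Fin N)) ∈ (G ω).edgeSet} := hindep.meas_biInter S
  have hsumlen : ∑ e ∈ S, elen (e : Sym2 (Fin N)) ≤ (k - 1) * N := by
    calc ∑ e ∈ S, elen (e : Sym2 (Fin N))
        ≤ ∑ q ∈ T.attach, elen ((f q : {e : Sym2 (Fin N) // 1 < elen e}) : Sym2 (Fin N)) :=
          my_sum_image_le _ _ _
      _ = ∑ q ∈ T.attach, L ^ (q.1).1 := by
          apply Finset.sum_congr rfl
          intro q _
          rw [hf]
          exact elen_edgeOf _
      _ = ∑ q ∈ T, L ^ q.1 := Finset.sum_attach T (fun q => L ^ q.1)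
      _ = ∑ q ∈ (Finset.Icc 1 (k-1) ×ˢ Finset.range N),
            (if (q.2 + 1) * L ^ q.1 < N then L ^ q.1 else 0) := by
          rw [hT, Finset.sum_filter]
      _ = ∑ j ∈ Finset.Icc 1 (k-1), ∑ i ∈ Finset.range N,
            (if (i + 1) * L ^ j < N then L ^ j else 0) := by
          rw [Finset.sum_product]
      _ ≤ ∑ _j ∈ Finset.Icc 1 (k-1), (N - 1) := by
          apply Finset.sum_le_sum
          intro j _
          exact inner_sum_le N (L ^ j) (Nat.pow_pos (by omega))
      _ ≤ (k - 1) * N := by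
          rw [Finset.sum_const, Nat.card_Icc, smul_eq_mul]
          exact Nat.mul_le_mul (by omega) (by omega)
  have hprodval : ∏ e ∈ S, P {ω | (e : Sym2 (Fin N)) ∈ (G ω).edgeSet}
      = ENNReal.ofReal (Real.exp (-(∑ e ∈ S, elen (e : Sym2 (Fin N)) : ℝ))) := by
    have hstep : ∏ e ∈ S, P {ω | (e : Sym2 (Fin N)) ∈ (G ω).edgeSet}
        = ∏ e ∈ S, ENNReal.ofReal (Real.exp (-(elen (e : Sym2 (Fin N)) : ℝ))) :=
      Finset.prod_congr rfl (fun e _ => hprob e.1 e.2)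
    rw [hstep, ← ENNReal.ofReal_prod_of_nonneg (fun e _ => le_of_lt (Real.exp_pos _)),
      ← Real.exp_sum]
    congr 1
    simp
  -- lower bound on P(E)
  have hlow : ENNReal.ofReal (Real.exp (-((k : ℝ) - 1) * (N : ℝ)))
      ≤ P (⋂ e ∈ S, {ω | (e : Sym2 (Fin N)) ∈ (G ω).edgeSet}) := by
    rw [hPE, hprodval]
    apply ENNReal.ofReal_le_ofReal
    apply Real.exp_le_exp.mpr
    have : ((∑ e ∈ S, elen (e : Sym2 (Fin N)) : ℕ) : ℝ) ≤ ((k:ℝ) - 1) * N := by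
      calc ((∑ e ∈ S, elen (e : Sym2 (Fin N)) : ℕ) : ℝ) ≤ (((k-1) * N : ℕ) : ℝ) := by
            exact_mod_cast hsumlen
        _ = ((k:ℝ) - 1) * N := by
            push_cast [Nat.cast_sub hk]
            ring
    push_cast at this
    linarith
  -- E is contained in the target event
  refine le_trans hlow (le_trans (measure_mono ?_) (le_refl _))
  intro ω hω
  simp only [Set.mem_iInter, Set.mem_setOf_eq] at hω ⊢
  -- adjacency at all scales
  have hadj : ∀ j, j < k → ∀ i : ℕ, ∀ (a b : Fin N),
      (a : ℕ) = i * L ^ j → (b : ℕ) = (i + 1) * L ^ j → (G ω).Adj a b := by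
    intro j hj i a b ha hb
    rcases Nat.eq_zero_or_pos j with hj0 | hj1
    · subst hj0
      simp only [pow_zero, mul_one] at ha hb
      exact hground ω a b (by omega)
    · have hbN : (i + 1) * L ^ j < N := hb ▸ b.isLt
      have hiN : i < N := by
        have h1 : i * L ^ j < N := ha ▸ a.isLt
        have h2 : 1 ≤ L ^ j := Nat.one_le_pow _ _ (by omega)
        calc i = i * 1 := by ring
          _ ≤ i * L ^ j := Nat.mul_le_mul_left _ h2
          _ < N := h1
      have hqT : (j, i) ∈ T := by
        rw [hT, Finset.mem_filter, Finset.mem_product, Finset.mem_Icc]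
        exact ⟨⟨⟨hj1, by omega⟩, Finset.mem_range.mpr hiN⟩, hbN⟩
      have hmem : f ⟨(j, i), hqT⟩ ∈ S := Finset.mem_image_of_mem f (Finset.mem_attach _ _)
      have hedge := hω _ hmem
      rw [hf] at hedge
      simp only [edgeOf, SimpleGraph.mem_edgeSet] at hedge
      convert hedge using 2
      all_goals first | exact Fin.ext ha | exact Fin.ext hb
  -- diameter bound
  have hdiam : ∀ x y : Fin N, (G ω).dist x y ≤ (2 * k - 1) * (L - 1) :=
    dist_bound_s14 (G ω) L k hL1 hk hLk hadj
  have hHinf : (Hinf (G ω) : ℝ) ≤ ((2 * k - 1) * (L - 1) : ℕ) := by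
    have : Hinf (G ω) ≤ (2 * k - 1) * (L - 1) := by
      apply Finset.sup_le
      intro q _
      exact hdiam q.1 q.2
    exact_mod_cast this
  have hfinal : (((2 * k - 1) * (L - 1) : ℕ) : ℝ) ≤ 3 * (k:ℝ) * R := by
    have h1 : ((L - 1 : ℕ) : ℝ) ≤ R := by
      rw [Nat.cast_sub hL1]
      push_cast
      linarith
    have h2 : ((2 * k - 1 : ℕ) : ℝ) ≤ 3 * (k:ℝ) := by
      calc ((2 * k - 1 : ℕ) : ℝ) ≤ ((3 * k : ℕ) : ℝ) := Nat.cast_le.mpr (by omega)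
        _ = 3 * (k:ℝ) := by push_cast; ring
    calc (((2 * k - 1) * (L - 1) : ℕ) : ℝ) = ((2 * k - 1 : ℕ) : ℝ) * ((L - 1 : ℕ) : ℝ) := by
          push_cast; ring
      _ ≤ (3 * (k:ℝ)) * R := by
          apply mul_le_mul h2 h1 (Nat.cast_nonneg _) (by positivity)
  calc HpE (G ω) p ≤ (Hinf (G ω) : ℝ) := HpE_le_Hinf (by omega) (G ω) p hp
    _ ≤ 3 * (k:ℝ) * R := le_trans hHinf hfinal
end
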